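/- arXiv:2303.07642 — 8 statements merged into one kernel-verified Lean document; each statement's English description precedes it below -/
import Mathlib

section
/- Let (a_k)_{k≥1} be a decreasing sequence of positive real numbers and λ > 0. If a_k - a_{k+1} ≥ λ a_{k+1}^2 for all k ≥ 1, then a_k ≤ max{a_1, 2/λ} / k for all k ≥ 1. -/
theorem stmt0 (a : ℕ → ℝ) (lam : ℝ) (hlam : 0 < lam)
    (hpos : ∀ k ≥ 1, 0 < a k)
    (hdec : ∀ k ≥ 1, a (k + 1) ≤ a k)
    (hrec : ∀ k ≥ 1, a k - a (k + 1) ≥ lam * (a (k + 1)) ^ 2) :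
    ∀ k ≥ 1, a k ≤ max (a 1) (2 / lam) / (k : ℝ) := by
  intro k hk
  induction k, hk using Nat.le_induction with
  | base => simpa using le_max_left (a 1) (2 / lam)
  | succ n hn ih =>
    set C := max (a 1) (2 / lam) with hC
    have hC2 : 2 / lam ≤ C := le_max_right _ _
    have hCpos : 0 < C := lt_of_lt_of_le (by positivity) hC2
    have hlamC : 2 ≤ lam * C := by
      rw [div_le_iff₀ hlam] at hC2; linarith [hC2]
    have hnp : (0:ℝ) < (n:ℝ) := by exact_mod_cast Nat.lt_of_lt_of_le Nat.zero_lt_one hn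
    have hnp1 : (0:ℝ) < (n:ℝ) + 1 := by linarith
    by_contra h
    push_neg at h
    push_cast at h
    have hx : 0 < a (n+1) := hpos (n+1) (by omega)
    have hrec' := hrec n hn
    have key : a (n+1) + lam * a (n+1)^2 ≤ C / n := by
      have := ih
      push_cast at this
      linarith
    have e1 : C / ((n:ℝ)+1) * ((n:ℝ)+1) = C := div_mul_cancel₀ _ (ne_of_gt hnp1)
    have e2 : C / (n:ℝ) * (n:ℝ) = C := div_mul_cancel₀ _ (ne_of_gt hnp)
    have ht : 0 < C / ((n:ℝ)+1) := div_pos hCpos hnp1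
    have hn1 : (1:ℝ) ≤ (n:ℝ) := by exact_mod_cast hn
    have k1 : (a (n+1) + lam * a (n+1)^2) * (n:ℝ) ≤ C := by
      have := mul_le_mul_of_nonneg_right key hnp.le
      rwa [e2] at this
    have k2 : C < a (n+1) * ((n:ℝ)+1) := by
      have := mul_lt_mul_of_pos_right h hnp1
      rwa [e1] at this
    have hb : lam * a (n+1) * (n:ℝ) < 1 := by
      have h3 : lam * a (n+1)^2 * (n:ℝ) < a (n+1) := by nlinarith
      have h4 : (lam * a (n+1) * (n:ℝ)) * a (n+1) < 1 * a (n+1) := by ring_nf; ring_nf at h3; linarith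
      exact lt_of_mul_lt_mul_right h4 hx.le
    have hb2 : lam * a (n+1) < 1 := by nlinarith
    have k3 : lam * C < lam * (a (n+1) * ((n:ℝ)+1)) := by
      exact mul_lt_mul_of_pos_left k2 hlam
    nlinarith
end

section
/- If a decreasing sequence of nonnegative reals (b_t) satisfies (b_{t+1})^2 ≤ C (b_t - b_{t+1}) for all t ≥ 0 with C > 0, then b_t ≤ max{b_1, 2C}/t for all t ≥ 1. -/
theorem stmt2 (b : ℕ → ℝ) (C : ℝ) (hC : 0 < C)
    (hnonneg : ∀ t, 0 ≤ b t)
    (hdec : ∀ t, b (t + 1) ≤ b t)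
    (hrec : ∀ t, (b (t + 1)) ^ 2 ≤ C * (b t - b (t + 1))) :
    ∀ t ≥ 1, b t ≤ max (b 1) (2 * C) / (t : ℝ) := by
  intro t ht
  induction t, ht using Nat.le_induction with
  | base => simpa using le_max_left (b 1) (2 * C)
  | succ n hn ih =>
    set M := max (b 1) (2 * C) with hMdef
    have hM : 2 * C ≤ M := le_max_right _ _
    have hn' : (1 : ℝ) ≤ (n : ℝ) := by exact_mod_cast hn
    have hnpos : (0 : ℝ) < (n : ℝ) := by linarith
    have hnp1 : (0 : ℝ) < (n : ℝ) + 1 := by linarith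
    rw [le_div_iff₀ hnpos] at ih
    have hcast : ((n + 1 : ℕ) : ℝ) = (n : ℝ) + 1 := by push_cast; ring
    rw [hcast, le_div_iff₀ hnp1]
    have h1 := hrec n
    have h2 := hnonneg (n + 1)
    nlinarith [mul_le_mul_of_nonneg_left ih (le_of_lt hC),
      mul_le_mul_of_nonneg_left h1 (le_of_lt hnpos),
      mul_nonneg h2 hnpos.le, sq_nonneg (b (n+1) * (n:ℝ) - M),
      mul_nonneg (mul_nonneg h2 h2) hnpos.le]
end

section
/- Let L > 0, D ≥ 0 with ‖u - x⁺‖ ≤ D for the relevant points. With the setup of the 1D proximal gradient step (x⁺ = x + α*(v-x), α* minimizing the quadratic model over [0,1]), for any u on the segment [x, v], ⟨∇f(x), x⁺ - u⟩ ≤ LD‖x⁺ - x‖. -/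
open scoped RealInnerProductSpace

/-!
The restriction of the quadratic model to the segment is a one-dimensional quadratic
`q β = β c + L β² N² / 2` with `c = ⟪g, v - x⟫` and `N = ‖v - x‖`, minimised over `[0, 1]` at `α`.
For `u = x + b (v - x)` the first-order optimality condition `0 ≤ q' α * (b - α)` bounds
`⟪g, x⁺ - u⟫ = (α - b) c` by `(b - α) L α N² ≤ L N · α N`, and `N ≤ D`.
-/

theorem IsMinOn.hasDerivWithinAt_mul_sub_nonneg {q : ℝ → ℝ} {q' α b : ℝ} {s : Set ℝ}
    (hs : Convex ℝ s) (hmin : IsMinOn q s α) (hq : HasDerivWithinAt q q' s α)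
    (hα : α ∈ s) (hb : b ∈ s) : 0 ≤ q' * (b - α) := by
  simpa [mul_comm] using hmin.localize.hasFDerivWithinAt_nonneg hq.hasFDerivWithinAt
    (sub_mem_posTangentConeAt_of_segment_subset (hs.segment_subset hα hb))

theorem hasDerivAt_quadraticModel (c L N α : ℝ) :
    HasDerivAt (fun β : ℝ => β * c + L * β ^ 2 / 2 * N ^ 2) (c + L * α * N ^ 2) α :=
  (((hasDerivAt_id' α).mul_const c).add
    ((((hasDerivAt_pow 2 α).const_mul L).div_const 2).mul_const (N ^ 2))).congr_deriv (by ring)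

theorem inner_sub_le_of_isMinOn_quadraticModel {E : Type*} [NormedAddCommGroup E]
    [InnerProductSpace ℝ E] {g x v u : E} {L α : ℝ} (hL : 0 ≤ L) (hα : α ∈ Set.Icc (0 : ℝ) 1)
    (hmin : IsMinOn (fun β : ℝ => β * ⟪g, v - x⟫ + L * β ^ 2 / 2 * ‖v - x‖ ^ 2)
      (Set.Icc 0 1) α)
    (hu : u ∈ segment ℝ x v) :
    ⟪g, x + α • (v - x) - u⟫ ≤ L * ‖v - x‖ * ‖α • (v - x)‖ := by
  rw [segment_eq_image'] at hu
  obtain ⟨b, hb, rfl⟩ := hu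
  have hopt := hmin.hasDerivWithinAt_mul_sub_nonneg (convex_Icc 0 1)
    (hasDerivAt_quadraticModel _ _ _ α).hasDerivWithinAt hα hb
  have hdiff : x + α • (v - x) - (x + b • (v - x)) = (α - b) • (v - x) := by module
  rw [hdiff, real_inner_smul_right, norm_smul, Real.norm_of_nonneg hα.1]
  have hmodel_nonneg : 0 ≤ L * α * ‖v - x‖ ^ 2 := by have := hα.1; positivity
  have hgap : 0 ≤ 1 - (b - α) := by linarith [hb.2, hα.1]
  nlinarith [mul_nonneg hgap hmodel_nonneg]

theorem stmt8_general {d : ℕ} (S : Set (EuclideanSpace ℝ (Fin d)))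
    (D : ℝ) (hD : ∀ a ∈ S, ∀ b ∈ S, ‖a - b‖ ≤ D)
    (x v g xp : EuclideanSpace ℝ (Fin d))
    (hxS : x ∈ S) (hvS : v ∈ S)
    (L : ℝ) (hL : 0 < L) (α : ℝ) (hα : α ∈ Set.Icc (0 : ℝ) 1)
    (hxp : xp = x + α • (v - x))
    (hmin : ∀ β ∈ Set.Icc (0 : ℝ) 1,
      α * ⟪g, v - x⟫ + L * α ^ 2 / 2 * ‖v - x‖ ^ 2 ≤
        β * ⟪g, v - x⟫ + L * β ^ 2 / 2 * ‖v - x‖ ^ 2) :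
    ∀ u ∈ segment ℝ x v, ⟪g, xp - u⟫ ≤ L * D * ‖xp - x‖ := by
  intro u hu
  have hstep : xp - x = α • (v - x) := by rw [hxp, add_sub_cancel_left]
  calc ⟪g, xp - u⟫ ≤ L * ‖v - x‖ * ‖xp - x‖ := by
        rw [hstep, hxp]
        exact inner_sub_le_of_isMinOn_quadraticModel hL.le hα hmin hu
    _ ≤ L * D * ‖xp - x‖ := by gcongr; exact hD v hvS x hxS

theorem stmt8 {d : ℕ} (S : Set (EuclideanSpace ℝ (Fin d))) (hS : Convex ℝ S)
    (D : ℝ) (hD0 : 0 ≤ D) (hD : ∀ a ∈ S, ∀ b ∈ S, ‖a - b‖ ≤ D)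
    (f : EuclideanSpace ℝ (Fin d) → ℝ)
    (x v g xp : EuclideanSpace ℝ (Fin d))
    (hxS : x ∈ S) (hvS : v ∈ S)
    (hg : HasGradientAt f g x)
    (L : ℝ) (hL : 0 < L) (α : ℝ) (hα : α ∈ Set.Icc (0 : ℝ) 1)
    (hxp : xp = x + α • (v - x))
    (hmin : ∀ β ∈ Set.Icc (0 : ℝ) 1,
      α * ⟪g, v - x⟫ + L * α ^ 2 / 2 * ‖v - x‖ ^ 2 ≤
        β * ⟪g, v - x⟫ + L * β ^ 2 / 2 * ‖v - x‖ ^ 2) :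
    ∀ u ∈ segment ℝ x v, ⟪g, xp - u⟫ ≤ L * D * ‖xp - x‖ :=
  stmt8_general S D hD x v g xp hxS hvS L hL α hα hxp hmin
end

section
/- Suppose f is convex and L-smooth on a convex compact set S of diameter D, and consider one outer cycle of PolyCD with exact line-search: x^{k} minimizes f over the segment [x^{k-1}, v^k] for k = 1,…,M, where v^1,…,v^M are the vertices of S. Then (f(x^M) - f*)² ≤ 2MLD²(f(x^0) - f(x^M)), where f* = min_{x∈S} f(x). -/
/-!
Exact line search makes each iterate first-order optimal on its segment, so
`⟪∇f(xₖ), xₖ - vₖ⟫ ≤ 0`. Going back one step, from `xᵢ₊₁` to `xᵢ`, the gap `⟪∇f(xᵢ), xᵢ - z⟫`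
grows by at most `δᵢ + √(2LD²δᵢ)`, where `δᵢ = f(xᵢ) - f(xᵢ₊₁)`: combine convexity at `xᵢ₊₁`
with the descent lemma at `xᵢ` at the point `xᵢ + θ(z - xᵢ)` and optimize over `θ ∈ [0, 1]`.
Hence `⟪∇f(x₀), x₀ - vₘ⟫ ≤ ∑ᵢ (δᵢ + √(2LD²δᵢ))` for every vertex, so for every point of the
polytope, in particular `x*`. The gradient inequality at `x₀` and telescoping give
`f(x_M) - f* ≤ ∑ᵢ √(2LD²δᵢ)`, and Cauchy–Schwarz squares this into the claim.
-/

open scoped RealInnerProductSpace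

open Set Finset

theorem le_of_hasDerivAt_le_add_mul {φ φ' : ℝ → ℝ} {c : ℝ}
    (hφ : ∀ t ∈ Icc (0 : ℝ) 1, HasDerivAt φ (φ' t) t)
    (hφ' : ∀ t ∈ Icc (0 : ℝ) 1, φ' t ≤ φ' 0 + c * t) :
    φ 1 ≤ φ 0 + φ' 0 + c / 2 := by
  set F : ℝ → ℝ := fun t => φ t - t * φ' 0 - c / 2 * t ^ 2
  have hF : ∀ t ∈ Icc (0 : ℝ) 1, HasDerivAt F (φ' t - φ' 0 - c * t) t := by
    intro t ht
    exact (((hφ t ht).sub ((hasDerivAt_id t).mul_const (φ' 0))).sub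
      ((hasDerivAt_pow 2 t).const_mul (c / 2))).congr_deriv (by simp; ring)
  have hanti : AntitoneOn F (Icc 0 1) :=
    antitoneOn_of_hasDerivWithinAt_nonpos (convex_Icc 0 1)
      (fun t ht => (hF t ht).continuousAt.continuousWithinAt)
      (fun t ht => (hF t (interior_subset ht)).hasDerivWithinAt)
      (fun t ht => by linarith [hφ' t (interior_subset ht)])
  have h01 := hanti (left_mem_Icc.2 zero_le_one) (right_mem_Icc.2 zero_le_one) zero_le_one
  simp only [F] at h01
  linarith

section Calculus

variable {E : Type*} [NormedAddCommGroup E] [InnerProductSpace ℝ E] [CompleteSpace E]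
  {f : E → ℝ}

theorem HasGradientAt.hasDerivAt_comp_add_smul {a u ga : E} {t : ℝ}
    (hf : HasGradientAt f ga (a + t • u)) :
    HasDerivAt (fun s : ℝ => f (a + s • u)) ⟪ga, u⟫ t := by
  have hline : HasDerivAt (fun s : ℝ => a + s • u) u t := by
    simpa using ((hasDerivAt_id t).smul_const u).const_add a
  simpa [Function.comp_def] using hf.hasFDerivAt.comp_hasDerivAt t hline

theorem ConvexOn.inner_gradient_le_sub {S : Set E} (hf : ConvexOn ℝ S f) {a b ga : E}
    (ha : a ∈ S) (hb : b ∈ S) (hg : HasGradientAt f ga a) :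
    ⟪ga, b - a⟫ ≤ f b - f a := by
  have hline : f ∘ AffineMap.lineMap a b = fun t : ℝ => f (a + t • (b - a)) := by
    ext t
    simp [AffineMap.lineMap_apply_module', add_comm]
  have hφ : ConvexOn ℝ (Icc 0 1) (fun t : ℝ => f (a + t • (b - a))) := hline ▸
    (hf.comp_affineMap _).subset (fun _ ht => hf.1.lineMap_mem ha hb ht) (convex_Icc 0 1)
  have hd : HasDerivAt (fun t : ℝ => f (a + t • (b - a))) ⟪ga, b - a⟫ 0 :=
    HasGradientAt.hasDerivAt_comp_add_smul (by simpa using hg)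
  simpa [slope_def_field] using
    hφ.le_slope_of_hasDerivAt (left_mem_Icc.2 zero_le_one) (right_mem_Icc.2 zero_le_one)
      zero_lt_one hd

theorem IsMinOn.inner_gradient_nonneg {C : Set E} {a b ga : E} (h : IsMinOn f C a)
    (hC : Convex ℝ C) (ha : a ∈ C) (hb : b ∈ C) (hg : HasGradientAt f ga a) :
    0 ≤ ⟪ga, b - a⟫ :=
  h.localize.hasFDerivWithinAt_nonneg hg.hasFDerivAt.hasFDerivWithinAt
    (sub_mem_posTangentConeAt_of_segment_subset (hC.segment_subset ha hb))

theorem le_add_inner_gradient_add_half_mul_sq {S : Set E} {g : E → E} {L : ℝ}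
    (hS : Convex ℝ S) (hgrad : ∀ y ∈ S, HasGradientAt f (g y) y)
    (hlip : ∀ a ∈ S, ∀ b ∈ S, ‖g a - g b‖ ≤ L * ‖a - b‖) {a b : E} (ha : a ∈ S)
    (hb : b ∈ S) :
    f b ≤ f a + ⟪g a, b - a⟫ + L / 2 * ‖b - a‖ ^ 2 := by
  have hmem : ∀ t ∈ Icc (0 : ℝ) 1, a + t • (b - a) ∈ S := fun t ht =>
    hS.add_smul_sub_mem ha hb ht
  have h := le_of_hasDerivAt_le_add_mul (φ := fun t => f (a + t • (b - a)))
    (φ' := fun t => ⟪g (a + t • (b - a)), b - a⟫) (c := L * ‖b - a‖ ^ 2)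
    (fun t ht => (hgrad _ (hmem t ht)).hasDerivAt_comp_add_smul) fun t ht => by
      have hlip_t : ‖g (a + t • (b - a)) - g a‖ ≤ L * (t * ‖b - a‖) := by
        simpa [norm_smul, abs_of_nonneg ht.1] using hlip _ (hmem t ht) a ha
      calc ⟪g (a + t • (b - a)), b - a⟫
          = ⟪g a, b - a⟫ + ⟪g (a + t • (b - a)) - g a, b - a⟫ := by
            rw [inner_sub_left]; ring
        _ ≤ ⟪g a, b - a⟫ + ‖g (a + t • (b - a)) - g a‖ * ‖b - a‖ := by
            gcongr; exact real_inner_le_norm _ _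
        _ ≤ ⟪g a, b - a⟫ + L * (t * ‖b - a‖) * ‖b - a‖ := by gcongr
        _ = _ := by simp only [zero_smul, add_zero]; ring
  simp only [zero_smul, add_zero, one_smul, add_sub_cancel] at h
  linarith

end Calculus

theorem le_add_sqrt_of_forall_mul_le {X A B : ℝ} (hA : 0 ≤ A)
    (h : ∀ θ ∈ Icc (0 : ℝ) 1, X * θ ≤ B + θ ^ 2 * (A / 2)) :
    X ≤ B + √(2 * A * B) := by
  have hB : 0 ≤ B := by simpa using h 0 (left_mem_Icc.2 zero_le_one)
  rcases le_or_gt X 0 with hX | hX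
  · linarith [Real.sqrt_nonneg (2 * A * B)]
  rcases le_or_gt X A with hXA | hAX
  · have hApos : 0 < A := hX.trans_le hXA
    have hθ := h (X / A) ⟨by positivity, (div_le_one hApos).2 hXA⟩
    have hsq : X ^ 2 ≤ 2 * A * B := by
      field_simp at hθ
      nlinarith
    linarith [Real.le_sqrt_of_sq_le hsq]
  · have hθ := h 1 (right_mem_Icc.2 zero_le_one)
    have hA2 : A / 2 ≤ √(2 * A * B) := Real.le_sqrt_of_sq_le (by nlinarith)
    linarith

theorem sq_sum_sqrt_le_card_mul_sum {ι : Type*} (s : Finset ι) {a : ι → ℝ}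
    (ha : ∀ i ∈ s, 0 ≤ a i) :
    (∑ i ∈ s, √(a i)) ^ 2 ≤ #s * ∑ i ∈ s, a i := by
  have h := sq_sum_le_card_mul_sum_sq (s := s) (f := fun i => √(a i))
  rwa [Finset.sum_congr rfl fun i hi => Real.sq_sqrt (ha i hi)] at h

section LineSearch

variable {E : Type*} [NormedAddCommGroup E] [InnerProductSpace ℝ E]
  {S : Set E} {f : E → ℝ} {g : E → E} {L D : ℝ}

def IsExactLineSearchStep (f : E → ℝ) (p v q : E) : Prop :=
  q ∈ segment ℝ p v ∧ IsMinOn f (segment ℝ p v) q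

theorem isExactLineSearchStep_of_eq_add_smul {p v q : E} {α : ℝ} (hα : α ∈ Icc (0 : ℝ) 1)
    (hq : q = p + α • (v - p)) (hmin : ∀ β ∈ Icc (0 : ℝ) 1, f q ≤ f (p + β • (v - p))) :
    IsExactLineSearchStep f p v q := by
  unfold IsExactLineSearchStep
  rw [segment_eq_image']
  exact ⟨⟨α, hα, hq.symm⟩, by rintro _ ⟨β, hβ, rfl⟩; exact hmin β hβ⟩

namespace IsExactLineSearchStep

variable {p v q : E}

theorem mem (h : IsExactLineSearchStep f p v q) (hS : Convex ℝ S) (hp : p ∈ S) (hv : v ∈ S) :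
    q ∈ S :=
  hS.segment_subset hp hv h.1

theorem apply_le (h : IsExactLineSearchStep f p v q) : f q ≤ f p :=
  h.2 (left_mem_segment ℝ p v)

variable [CompleteSpace E]

theorem inner_gradient_nonpos (h : IsExactLineSearchStep f p v q) {gq s : E}
    (hg : HasGradientAt f gq q) (hs : s ∈ segment ℝ p v) : ⟪gq, q - s⟫ ≤ 0 := by
  have := h.2.inner_gradient_nonneg (convex_segment p v) h.1 hs hg
  rw [← neg_sub s q, inner_neg_right]
  linarith

end IsExactLineSearchStep

variable [CompleteSpace E]

theorem inner_gradient_sub_le_of_inner_nonpos (hconv : ConvexOn ℝ S f)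
    (hgrad : ∀ y ∈ S, HasGradientAt f (g y) y)
    (hlip : ∀ a ∈ S, ∀ b ∈ S, ‖g a - g b‖ ≤ L * ‖a - b‖) (hL : 0 ≤ L)
    (hD : ∀ a ∈ S, ∀ b ∈ S, ‖a - b‖ ≤ D) {p q z : E} (hp : p ∈ S) (hq : q ∈ S) (hz : z ∈ S)
    (hqp : ⟪g q, q - p⟫ ≤ 0) :
    ⟪g p, p - z⟫ ≤ ⟪g q, q - z⟫ + (f p - f q + √(2 * (L * D ^ 2) * (f p - f q))) := by
  set B := f p - f q + ⟪g q, q - p⟫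
  have hX : ⟪g p - g q, p - z⟫ ≤ B + √(2 * (L * D ^ 2) * B) := by
    refine le_add_sqrt_of_forall_mul_le (by positivity) fun θ hθ => ?_
    have hy := hconv.1.add_smul_sub_mem hp hz hθ
    have hconv_q := hconv.inner_gradient_le_sub hq hy (hgrad q hq)
    have hdesc := le_add_inner_gradient_add_half_mul_sq hconv.1 hgrad hlip hp hy
    rw [show p + θ • (z - p) - q = θ • (z - p) - (q - p) by abel, inner_sub_right,
      real_inner_smul_right] at hconv_q
    rw [add_sub_cancel_left, real_inner_smul_right, norm_smul, Real.norm_eq_abs,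
      abs_of_nonneg hθ.1, mul_pow] at hdesc
    have hzp : ‖z - p‖ ^ 2 ≤ D ^ 2 := by
      gcongr
      exact hD z hz p hp
    have hLθ : L / 2 * θ ^ 2 * ‖z - p‖ ^ 2 ≤ L / 2 * θ ^ 2 * D ^ 2 := by gcongr
    rw [inner_sub_left, ← neg_sub z p, inner_neg_right, inner_neg_right]
    linarith
  have hB : B ≤ f p - f q := by linarith
  have hsqrt : √(2 * (L * D ^ 2) * B) ≤ √(2 * (L * D ^ 2) * (f p - f q)) := by gcongr
  have hsplit : ⟪g q, p - z⟫ = ⟪g q, q - z⟫ - ⟪g q, q - p⟫ := by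
    rw [← inner_sub_right, sub_sub_sub_cancel_left]
  rw [inner_sub_left] at hX
  linarith

end LineSearch

theorem inner_sub_le_of_mem_convexHull {E : Type*} [NormedAddCommGroup E]
    [InnerProductSpace ℝ E] {V : Set E} {c x₀ y : E} {W : ℝ}
    (hV : ∀ v ∈ V, ⟪c, x₀ - v⟫ ≤ W) (hy : y ∈ convexHull ℝ V) : ⟪c, x₀ - y⟫ ≤ W := by
  have hsub : V ⊆ {y : E | ⟪c, x₀⟫ - W ≤ ⟪c, y⟫} := fun v hv => by
    have := hV v hv
    rw [inner_sub_right] at this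
    rw [mem_ofPred_eq]
    linarith
  have hyhalf := convexHull_min hsub (convex_halfSpace_ge (innerₛₗ ℝ c).isLinear _) hy
  rw [mem_ofPred_eq] at hyhalf
  rw [inner_sub_right]
  linarith

section Cycle

variable {E : Type*} [NormedAddCommGroup E] [InnerProductSpace ℝ E]
  {S : Set E} {f : E → ℝ} {g : E → E} {L D : ℝ} {M : ℕ} {v x : ℕ → E}

theorem mem_of_isExactLineSearchStep (hS : Convex ℝ S) (hv : ∀ k < M, v (k + 1) ∈ S)
    (hx0 : x 0 ∈ S) (hstep : ∀ k < M, IsExactLineSearchStep f (x k) (v (k + 1)) (x (k + 1))) :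
    ∀ i ≤ M, x i ∈ S := by
  intro i
  induction i with
  | zero => exact fun _ => hx0
  | succ k ih => exact fun hk => (hstep k hk).mem hS (ih (by omega)) (hv k hk)

variable [CompleteSpace E]

theorem inner_gradient_sub_vertex_le_sum (hconv : ConvexOn ℝ S f)
    (hgrad : ∀ y ∈ S, HasGradientAt f (g y) y)
    (hlip : ∀ a ∈ S, ∀ b ∈ S, ‖g a - g b‖ ≤ L * ‖a - b‖) (hL : 0 ≤ L)
    (hD : ∀ a ∈ S, ∀ b ∈ S, ‖a - b‖ ≤ D) (hv : ∀ k < M, v (k + 1) ∈ S) (hx : ∀ i ≤ M, x i ∈ S)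
    (hstep : ∀ k < M, IsExactLineSearchStep f (x k) (v (k + 1)) (x (k + 1)))
    {m : ℕ} (hm : m < M) {j : ℕ} (hj : j ≤ m + 1) :
    ⟪g (x j), x j - v (m + 1)⟫ ≤ ∑ i ∈ Ico j (m + 1),
      (f (x i) - f (x (i + 1)) + √(2 * (L * D ^ 2) * (f (x i) - f (x (i + 1))))) := by
  induction hj using Nat.decreasingInduction with
  | self =>
    simpa using (hstep m hm).inner_gradient_nonpos (hgrad _ (hx _ hm)) (right_mem_segment ℝ _ _)
  | of_succ j hj ih =>
    have hqp := (hstep j (by omega)).inner_gradient_nonpos (hgrad _ (hx _ (by omega)))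
      (left_mem_segment ℝ _ _)
    have := inner_gradient_sub_le_of_inner_nonpos hconv hgrad hlip hL hD (hx j (by omega))
      (hx (j + 1) (by omega)) (hv m hm) hqp
    rw [Finset.sum_eq_sum_Ico_succ_bot (by omega)]
    linarith

theorem sub_le_sum_sqrt_of_mem_convexHull (hconv : ConvexOn ℝ S f)
    (hgrad : ∀ y ∈ S, HasGradientAt f (g y) y)
    (hlip : ∀ a ∈ S, ∀ b ∈ S, ‖g a - g b‖ ≤ L * ‖a - b‖) (hL : 0 ≤ L)
    (hD : ∀ a ∈ S, ∀ b ∈ S, ‖a - b‖ ≤ D) (hv : ∀ k < M, v (k + 1) ∈ S) (hx0 : x 0 ∈ S)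
    (hstep : ∀ k < M, IsExactLineSearchStep f (x k) (v (k + 1)) (x (k + 1)))
    {y : E} (hy : y ∈ S) (hyV : y ∈ convexHull ℝ (v '' Set.Icc 1 M)) :
    f (x M) - f y ≤ ∑ i ∈ range M, √(2 * (L * D ^ 2) * (f (x i) - f (x (i + 1)))) := by
  have hx := mem_of_isExactLineSearchStep hconv.1 hv hx0 hstep
  have hgap : ⟪g (x 0), x 0 - y⟫ ≤ ∑ i ∈ range M,
      (f (x i) - f (x (i + 1)) + √(2 * (L * D ^ 2) * (f (x i) - f (x (i + 1))))) := by
    refine inner_sub_le_of_mem_convexHull ?_ hyV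
    rintro _ ⟨m, ⟨hm1, hmM⟩, rfl⟩
    obtain ⟨k, rfl⟩ : ∃ k, m = k + 1 := ⟨m - 1, by omega⟩
    calc _ ≤ _ := inner_gradient_sub_vertex_le_sum hconv hgrad hlip hL hD hv hx hstep
          (by omega : k < M) (Nat.zero_le _)
      _ ≤ _ := by
        rw [← range_eq_Ico]
        refine sum_le_sum_of_subset_of_nonneg (range_subset_range.2 (by omega)) fun i hi _ => ?_
        exact add_nonneg (sub_nonneg.2 (hstep i (mem_range.1 hi)).apply_le) (Real.sqrt_nonneg _)
  have hfy := hconv.inner_gradient_le_sub hx0 hy (hgrad _ hx0)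
  rw [sum_add_distrib, sum_range_sub' (fun i => f (x i))] at hgap
  rw [← neg_sub, inner_neg_right] at hfy
  linarith

end Cycle

theorem stmt10_general {d : ℕ} (M : ℕ)
    (v : ℕ → EuclideanSpace ℝ (Fin d))
    (S : Set (EuclideanSpace ℝ (Fin d)))
    (hSdef : S = convexHull ℝ (v '' Set.Icc 1 M))
    (D L : ℝ) (hL : 0 < L) (hD : ∀ a ∈ S, ∀ b ∈ S, ‖a - b‖ ≤ D)
    (f : EuclideanSpace ℝ (Fin d) → ℝ)
    (g : EuclideanSpace ℝ (Fin d) → EuclideanSpace ℝ (Fin d))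
    (hconv : ConvexOn ℝ S f)
    (hgrad : ∀ y ∈ S, HasGradientAt f (g y) y)
    (hlip : ∀ a ∈ S, ∀ b ∈ S, ‖g a - g b‖ ≤ L * ‖a - b‖)
    (xstar : EuclideanSpace ℝ (Fin d)) (hxs : xstar ∈ S)
    (hmin : ∀ y ∈ S, f xstar ≤ f y)
    (x : ℕ → EuclideanSpace ℝ (Fin d)) (hx0 : x 0 ∈ S)
    (α : ℕ → ℝ)
    (hstep : ∀ k, 1 ≤ k → k ≤ M →
      α k ∈ Set.Icc (0 : ℝ) 1 ∧
      x k = x (k - 1) + α k • (v k - x (k - 1)) ∧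
      ∀ β ∈ Set.Icc (0 : ℝ) 1, f (x k) ≤ f (x (k - 1) + β • (v k - x (k - 1)))) :
    (f (x M) - f xstar) ^ 2 ≤ 2 * M * L * D ^ 2 * (f (x 0) - f (x M)) := by
  have hv : ∀ k < M, v (k + 1) ∈ S := fun k hk =>
    hSdef ▸ subset_convexHull ℝ _ ⟨k + 1, ⟨by omega, by omega⟩, rfl⟩
  have hls : ∀ k < M, IsExactLineSearchStep f (x k) (v (k + 1)) (x (k + 1)) := fun k hk => by
    obtain ⟨hα, hxk, hxmin⟩ := hstep (k + 1) (by omega) hk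
    exact isExactLineSearchStep_of_eq_add_smul hα hxk hxmin
  have hgap := sub_le_sum_sqrt_of_mem_convexHull hconv hgrad hlip hL.le hD hv hx0 hls hxs
    (hSdef ▸ hxs)
  have hxM := mem_of_isExactLineSearchStep hconv.1 hv hx0 hls M le_rfl
  have hterm_nonneg : ∀ i ∈ range M, 0 ≤ 2 * (L * D ^ 2) * (f (x i) - f (x (i + 1))) := fun i hi =>
    mul_nonneg (by positivity) (sub_nonneg.2 (hls i (mem_range.1 hi)).apply_le)
  calc (f (x M) - f xstar) ^ 2
      ≤ (∑ i ∈ range M, √(2 * (L * D ^ 2) * (f (x i) - f (x (i + 1))))) ^ 2 := by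
        gcongr
        exact sub_nonneg.2 (hmin _ hxM)
    _ ≤ (M : ℝ) * ∑ i ∈ range M, 2 * (L * D ^ 2) * (f (x i) - f (x (i + 1))) := by
        simpa using sq_sum_sqrt_le_card_mul_sum (range M) hterm_nonneg
    _ = 2 * M * L * D ^ 2 * (f (x 0) - f (x M)) := by
        rw [← mul_sum, sum_range_sub' (fun i => f (x i))]
        ring

theorem stmt10 {d : ℕ} (M : ℕ) (hM : 1 ≤ M)
    (v : ℕ → EuclideanSpace ℝ (Fin d))
    (S : Set (EuclideanSpace ℝ (Fin d)))
    (hSdef : S = convexHull ℝ (v '' Set.Icc 1 M))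
    (D L : ℝ) (hL : 0 < L) (hD : ∀ a ∈ S, ∀ b ∈ S, ‖a - b‖ ≤ D)
    (f : EuclideanSpace ℝ (Fin d) → ℝ)
    (g : EuclideanSpace ℝ (Fin d) → EuclideanSpace ℝ (Fin d))
    (hconv : ConvexOn ℝ S f)
    (hgrad : ∀ y ∈ S, HasGradientAt f (g y) y)
    (hlip : ∀ a ∈ S, ∀ b ∈ S, ‖g a - g b‖ ≤ L * ‖a - b‖)
    (xstar : EuclideanSpace ℝ (Fin d)) (hxs : xstar ∈ S)
    (hmin : ∀ y ∈ S, f xstar ≤ f y)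
    (x : ℕ → EuclideanSpace ℝ (Fin d)) (hx0 : x 0 ∈ S)
    (α : ℕ → ℝ)
    (hstep : ∀ k, 1 ≤ k → k ≤ M →
      α k ∈ Set.Icc (0 : ℝ) 1 ∧
      x k = x (k - 1) + α k • (v k - x (k - 1)) ∧
      ∀ β ∈ Set.Icc (0 : ℝ) 1, f (x k) ≤ f (x (k - 1) + β • (v k - x (k - 1)))) :
    (f (x M) - f xstar) ^ 2 ≤ 2 * M * L * D ^ 2 * (f (x 0) - f (x M)) :=
  stmt10_general M v S hSdef D L hL hD f g hconv hgrad hlip xstar hxs hmin x hx0 α hstep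
end

section
/- Suppose f is convex and L-smooth on a convex compact set S of diameter D, and consider one outer cycle of PolyCD with 1D gradient steps: for k = 1,…,M, x^k = x^{k-1} + α_k(v^k - x^{k-1}) with α_k ∈ argmin_{α∈[0,1]}{α⟨∇f(x^{k-1}), v^k - x^{k-1}⟩ + (Lα²/2)‖v^k - x^{k-1}‖²}. Then (f(x^M) - f*)² ≤ 8MLD²(f(x^0) - f(x^M)). -/
open scoped RealInnerProductSpace
open Set

/-!
Each step decreases `f` at least as much as the quadratic upper model predicts. First-order
optimality of `α_k` turns this into `L/2 ‖x^k - x^{k-1}‖² ≤ f(x^{k-1}) - f(x^k)`, so by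
Cauchy–Schwarz `L ‖x^M - x^{k-1}‖ ≤ √(2ML(f(x^0) - f(x^M)))`. Evaluating the model at its
unconstrained minimiser (or at `β = 1`) bounds `⟪∇f(x^{k-1}), x^{k-1} - v^k⟫` by the decrease plus
`D √(2L · decrease)`. Transporting this to `x^M` with the Lipschitz gradient and the gradient
inequality gives `⟪∇f(x^M), x^M - v^k⟫ ≤ 2D √(2ML(f(x^0) - f(x^M)))` for every vertex, hence for
`x*` in their convex hull, and convexity gives `f(x^M) - f* ≤ ⟪∇f(x^M), x^M - x*⟫`.
-/

lemma mul_add_two_mul_sq_nonpos_of_isMinOn {G c α : ℝ} (hα : α ∈ Icc (0 : ℝ) 1)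
    (hmin : IsMinOn (fun β => β * G + c * β ^ 2) (Icc 0 1) α) : α * G + 2 * c * α ^ 2 ≤ 0 := by
  have hderiv : HasDerivAt (fun β => β * G + c * β ^ 2) (G + 2 * c * α) α := by
    have := ((hasDerivAt_id α).mul_const G).add ((hasDerivAt_pow 2 α).const_mul c)
    exact this.congr_deriv (by simp only [Nat.add_one_sub_one, pow_one, Nat.cast_ofNat]; ring)
  have hcone : 0 - α ∈ posTangentConeAt (Icc (0 : ℝ) 1) α :=
    sub_mem_posTangentConeAt_of_segment_subset
      ((convex_Icc 0 1).segment_subset hα (left_mem_Icc.2 zero_le_one))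
  have := hmin.localize.hasFDerivWithinAt_nonneg hderiv.hasFDerivAt.hasFDerivWithinAt hcone
  simp only [zero_sub, ContinuousLinearMap.toSpanSingleton_apply, smul_eq_mul, neg_mul,
    Left.nonneg_neg_iff] at this
  nlinarith

lemma neg_le_add_mul_sqrt_of_forall_Icc {G r L δ : ℝ} (hr : 0 ≤ r) (hL : 0 ≤ L)
    (h : ∀ β ∈ Icc (0 : ℝ) 1, -(β * G + L * β ^ 2 / 2 * r ^ 2) ≤ δ) :
    -G ≤ δ + r * √(2 * L * δ) := by
  have hδ : 0 ≤ δ := by simpa using h 0 (left_mem_Icc.2 zero_le_one)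
  have hsq : (r * √(2 * L * δ)) ^ 2 = 2 * L * r ^ 2 * δ := by
    rw [mul_pow, Real.sq_sqrt (by positivity)]; ring
  have hnonneg : 0 ≤ r * √(2 * L * δ) := by positivity
  rcases le_or_gt (-G) 0 with hG | hG
  · linarith
  rcases le_total (-G) (L * r ^ 2) with hsmall | hlarge
  · -- the unconstrained minimiser `-G / (L r²)` of the model lies in `[0, 1]`
    have hLr : 0 < L * r ^ 2 := hG.trans_le hsmall
    have := h (-G / (L * r ^ 2)) ⟨by positivity, (div_le_one hLr).2 hsmall⟩
    have hval : -G / (L * r ^ 2) * G + L * (-G / (L * r ^ 2)) ^ 2 / 2 * r ^ 2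
        = -(G ^ 2 / (2 * (L * r ^ 2))) := by
      field_simp; ring
    rw [hval, neg_neg, div_le_iff₀ (by positivity)] at this
    nlinarith
  · have := h 1 (right_mem_Icc.2 zero_le_one)
    nlinarith [mul_nonneg hL (sq_nonneg r)]

lemma mul_norm_sub_sq_le_of_forall_Ico {E : Type*} [SeminormedAddCommGroup E] {x : ℕ → E}
    {y : ℕ → ℝ} {c : ℝ} (hc : 0 ≤ c) {m n : ℕ} (hmn : m ≤ n)
    (h : ∀ j ∈ Finset.Ico m n, c * ‖x (j + 1) - x j‖ ^ 2 ≤ y j - y (j + 1)) :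
    c * ‖x n - x m‖ ^ 2 ≤ (n - m : ℕ) * (y m - y n) := by
  have htri : ‖x n - x m‖ ≤ ∑ j ∈ Finset.Ico m n, ‖x (j + 1) - x j‖ := by
    simpa [dist_eq_norm, norm_sub_rev] using dist_le_Ico_sum_dist x hmn
  have htel : ∑ j ∈ Finset.Ico m n, (y j - y (j + 1)) = y m - y n := by
    simpa only [neg_sub_neg] using Finset.sum_Ico_sub (fun j => -y j) hmn
  calc c * ‖x n - x m‖ ^ 2 ≤ c * (∑ j ∈ Finset.Ico m n, ‖x (j + 1) - x j‖) ^ 2 := by gcongr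
    _ ≤ c * ((n - m : ℕ) * ∑ j ∈ Finset.Ico m n, ‖x (j + 1) - x j‖ ^ 2) := by
        gcongr
        simpa using sq_sum_le_card_mul_sum_sq (s := Finset.Ico m n)
          (f := fun j => ‖x (j + 1) - x j‖)
    _ = (n - m : ℕ) * ∑ j ∈ Finset.Ico m n, c * ‖x (j + 1) - x j‖ ^ 2 := by
        rw [Finset.mul_sum, Finset.mul_sum, Finset.mul_sum]; ring_nf
    _ ≤ (n - m : ℕ) * ∑ j ∈ Finset.Ico m n, (y j - y (j + 1)) := by
        gcongr with j hj; exact h j hj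
    _ = (n - m : ℕ) * (y m - y n) := by rw [htel]

section InnerProductSpace

variable {E : Type*} [NormedAddCommGroup E] [InnerProductSpace ℝ E]

lemma inner_sub_le_of_mem_convexHull_s11 {s : Set E} {a b : E} {B : ℝ} (h : ∀ v ∈ s, ⟪a, b - v⟫ ≤ B)
    {y : E} (hy : y ∈ convexHull ℝ s) : ⟪a, b - y⟫ ≤ B := by
  have hconv : Convex ℝ {y | ⟪a, b - y⟫ ≤ B} := by
    simpa only [inner_sub_right, sub_le_comm, innerₛₗ_apply_apply] using
      convex_halfSpace_ge (innerₛₗ ℝ a).isLinear (⟪a, b⟫ - B)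
  exact convexHull_min h hconv hy

/-- `α` minimises over `[0, 1]` the quadratic upper model
`β ↦ β ⟪g x, v - x⟫ + L β² / 2 ‖v - x‖²` of `f (x + β (v - x)) - f x`. -/
def IsPolyCDStep (L : ℝ) (g : E → E) (x v : E) (α : ℝ) (x' : E) : Prop :=
  α ∈ Icc (0 : ℝ) 1 ∧ x' = x + α • (v - x) ∧
    ∀ β ∈ Icc (0 : ℝ) 1, α * ⟪g x, v - x⟫ + L * α ^ 2 / 2 * ‖v - x‖ ^ 2 ≤
      β * ⟪g x, v - x⟫ + L * β ^ 2 / 2 * ‖v - x‖ ^ 2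

lemma IsPolyCDStep.mem {L : ℝ} {g : E → E} {x v x' : E} {α : ℝ}
    (h : IsPolyCDStep L g x v α x') {S : Set E} (hS : Convex ℝ S) (hx : x ∈ S) (hv : v ∈ S) :
    x' ∈ S :=
  h.2.1 ▸ hS.add_smul_sub_mem hx hv h.1

variable [CompleteSpace E] {S : Set E} {f : E → ℝ} {g : E → E} {L : ℝ}

lemma HasGradientAt.hasDerivAt_comp_lineMap {G x y : E} {t : ℝ}
    (hf : HasGradientAt f G (AffineMap.lineMap x y t)) :
    HasDerivAt (fun s => f (AffineMap.lineMap x y s)) ⟪G, y - x⟫ t := by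
  have := hf.hasFDerivAt.comp_hasDerivAt t (AffineMap.hasDerivAt_lineMap (a := x) (b := y))
  simpa [Function.comp_def] using this

lemma ConvexOn.sub_le_inner_gradient (hf : ConvexOn ℝ S f) {x y G : E} (hx : x ∈ S) (hy : y ∈ S)
    (hG : HasGradientAt f G x) : f x - f y ≤ ⟪G, x - y⟫ := by
  have hconv : ConvexOn ℝ (Icc 0 1) (fun t : ℝ => f (AffineMap.lineMap x y t)) :=
    (hf.comp_affineMap (AffineMap.lineMap x y)).subset
      (fun t ht => (hf.1.lineMap_mem hx hy ht)) (convex_Icc 0 1)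
  have hderiv : HasDerivAt (fun t : ℝ => f (AffineMap.lineMap x y t)) ⟪G, y - x⟫ 0 :=
    HasGradientAt.hasDerivAt_comp_lineMap (by rwa [AffineMap.lineMap_apply_zero])
  have := hconv.le_slope_of_hasDerivAt (by simp) (by simp) zero_lt_one hderiv
  simp only [slope_def_field, AffineMap.lineMap_apply_one, AffineMap.lineMap_apply_zero, sub_zero,
    div_one] at this
  rw [← neg_sub y x, inner_neg_right]
  linarith

lemma Convex.le_add_inner_add_sq_of_lipschitz_gradient (hS : Convex ℝ S)
    (hgrad : ∀ y ∈ S, HasGradientAt f (g y) y)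
    (hlip : ∀ a ∈ S, ∀ b ∈ S, ‖g a - g b‖ ≤ L * ‖a - b‖) {x y : E} (hx : x ∈ S) (hy : y ∈ S) :
    f y ≤ f x + ⟪g x, y - x⟫ + L / 2 * ‖y - x‖ ^ 2 := by
  set ψ : ℝ → ℝ := fun t =>
    f (AffineMap.lineMap x y t : E) - t * ⟪g x, y - x⟫ - L / 2 * t ^ 2 * ‖y - x‖ ^ 2
  have hψ' : ∀ t ∈ Icc (0 : ℝ) 1, HasDerivAt ψ
      (⟪g (AffineMap.lineMap x y t), y - x⟫ - ⟪g x, y - x⟫ - L * t * ‖y - x‖ ^ 2) t := by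
    intro t ht
    have := (((hgrad _ (hS.lineMap_mem hx hy ht)).hasDerivAt_comp_lineMap).sub
      ((hasDerivAt_id t).mul_const ⟪g x, y - x⟫)).sub
      (((hasDerivAt_pow 2 t).const_mul (L / 2)).mul_const (‖y - x‖ ^ 2))
    exact this.congr_deriv
      (by simp only [Nat.add_one_sub_one, pow_one, one_mul, Nat.cast_ofNat]; ring)
  have hψ'_nonpos : ∀ t ∈ Icc (0 : ℝ) 1,
      ⟪g (AffineMap.lineMap x y t), y - x⟫ - ⟪g x, y - x⟫ - L * t * ‖y - x‖ ^ 2 ≤ 0 := by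
    intro t ht
    have hdist : ‖AffineMap.lineMap x y t - x‖ = t * ‖y - x‖ := by
      rw [← dist_eq_norm, dist_lineMap_left, Real.norm_of_nonneg ht.1, dist_eq_norm, norm_sub_rev]
    rw [sub_nonpos]
    calc ⟪g (AffineMap.lineMap x y t), y - x⟫ - ⟪g x, y - x⟫
        = ⟪g (AffineMap.lineMap x y t) - g x, y - x⟫ := (inner_sub_left _ _ _).symm
      _ ≤ ‖g (AffineMap.lineMap x y t) - g x‖ * ‖y - x‖ := real_inner_le_norm _ _
      _ ≤ L * ‖AffineMap.lineMap x y t - x‖ * ‖y - x‖ := by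
          gcongr; exact hlip _ (hS.lineMap_mem hx hy ht) _ hx
      _ = L * t * ‖y - x‖ ^ 2 := by rw [hdist]; ring
  have hanti : AntitoneOn ψ (Icc 0 1) :=
    antitoneOn_of_hasDerivWithinAt_nonpos (convex_Icc 0 1)
      (fun t ht => (hψ' t ht).continuousAt.continuousWithinAt)
      (fun t ht => (hψ' t (interior_subset ht)).hasDerivWithinAt)
      (fun t ht => hψ'_nonpos t (interior_subset ht))
  have := hanti (left_mem_Icc.2 zero_le_one) (right_mem_Icc.2 zero_le_one) zero_le_one
  simp only [ψ, AffineMap.lineMap_apply_one, AffineMap.lineMap_apply_zero] at this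
  linarith

namespace IsPolyCDStep

variable {x v x' : E} {α : ℝ}

lemma neg_model_le (h : IsPolyCDStep L g x v α x') (hS : Convex ℝ S)
    (hgrad : ∀ y ∈ S, HasGradientAt f (g y) y)
    (hlip : ∀ a ∈ S, ∀ b ∈ S, ‖g a - g b‖ ≤ L * ‖a - b‖) (hx : x ∈ S) (hx' : x' ∈ S) :
    ∀ β ∈ Icc (0 : ℝ) 1, -(β * ⟪g x, v - x⟫ + L * β ^ 2 / 2 * ‖v - x‖ ^ 2) ≤ f x - f x' := by
  obtain ⟨-, rfl, hopt⟩ := h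
  intro β hβ
  have hdesc := hS.le_add_inner_add_sq_of_lipschitz_gradient hgrad hlip hx hx'
  rw [add_sub_cancel_left, real_inner_smul_right, norm_smul, mul_pow, Real.norm_eq_abs,
    sq_abs] at hdesc
  linarith [hopt β hβ]

lemma apply_le (h : IsPolyCDStep L g x v α x') (hS : Convex ℝ S)
    (hgrad : ∀ y ∈ S, HasGradientAt f (g y) y)
    (hlip : ∀ a ∈ S, ∀ b ∈ S, ‖g a - g b‖ ≤ L * ‖a - b‖) (hx : x ∈ S) (hx' : x' ∈ S) :
    f x' ≤ f x := by
  simpa using h.neg_model_le hS hgrad hlip hx hx' 0 (left_mem_Icc.2 zero_le_one)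

lemma mul_norm_sub_sq_le (h : IsPolyCDStep L g x v α x') (hS : Convex ℝ S)
    (hgrad : ∀ y ∈ S, HasGradientAt f (g y) y)
    (hlip : ∀ a ∈ S, ∀ b ∈ S, ‖g a - g b‖ ≤ L * ‖a - b‖) (hx : x ∈ S) (hx' : x' ∈ S) :
    L / 2 * ‖x' - x‖ ^ 2 ≤ f x - f x' := by
  have hmodel := h.neg_model_le hS hgrad hlip hx hx' α h.1
  obtain ⟨hα, rfl, hopt⟩ := h
  have hfirst := mul_add_two_mul_sq_nonpos_of_isMinOn (G := ⟪g x, v - x⟫)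
    (c := L / 2 * ‖v - x‖ ^ 2) hα (isMinOn_iff.2 fun β hβ => by linarith [hopt β hβ])
  rw [add_sub_cancel_left, norm_smul, mul_pow, Real.norm_eq_abs, sq_abs]
  linarith

lemma inner_sub_le (h : IsPolyCDStep L g x v α x') (hS : Convex ℝ S) (hL : 0 ≤ L)
    (hgrad : ∀ y ∈ S, HasGradientAt f (g y) y)
    (hlip : ∀ a ∈ S, ∀ b ∈ S, ‖g a - g b‖ ≤ L * ‖a - b‖) (hx : x ∈ S) (hx' : x' ∈ S) :
    ⟪g x, x - v⟫ ≤ f x - f x' + ‖v - x‖ * √(2 * L * (f x - f x')) := by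
  rw [← neg_sub, inner_neg_right]
  exact neg_le_add_mul_sqrt_of_forall_Icc (norm_nonneg _) hL
    (h.neg_model_le hS hgrad hlip hx hx')

end IsPolyCDStep

section Cycle

variable {x v : ℕ → E} {α : ℕ → ℝ} {M : ℕ}

lemma antitoneOn_of_isPolyCDStep (hS : Convex ℝ S) (hgrad : ∀ y ∈ S, HasGradientAt f (g y) y)
    (hlip : ∀ a ∈ S, ∀ b ∈ S, ‖g a - g b‖ ≤ L * ‖a - b‖) (hxS : ∀ k ≤ M, x k ∈ S)
    (hsteps : ∀ n < M, IsPolyCDStep L g (x n) (v (n + 1)) (α (n + 1)) (x (n + 1))) :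
    AntitoneOn (fun k => f (x k)) (Iic M) :=
  antitoneOn_of_succ_le ordConnected_Iic fun n _ _ hn => by
    rw [Order.succ_eq_add_one, mem_Iic] at hn
    exact (hsteps n hn).apply_le hS hgrad hlip (hxS n (by omega)) (hxS _ hn)

lemma ConvexOn.inner_gradient_sub_vertex_le (hconv : ConvexOn ℝ S f) (hL : 0 < L)
    (hgrad : ∀ y ∈ S, HasGradientAt f (g y) y)
    (hlip : ∀ a ∈ S, ∀ b ∈ S, ‖g a - g b‖ ≤ L * ‖a - b‖) {D : ℝ}
    (hD : ∀ a ∈ S, ∀ b ∈ S, ‖a - b‖ ≤ D) {n : ℕ} (hn : n < M) (hxS : ∀ k ≤ M, x k ∈ S)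
    (hvS : v (n + 1) ∈ S)
    (hsteps : ∀ n < M, IsPolyCDStep L g (x n) (v (n + 1)) (α (n + 1)) (x (n + 1))) :
    ⟪g (x M), x M - v (n + 1)⟫ ≤ 2 * D * √(2 * M * L * (f (x 0) - f (x M))) := by
  have hxn := hxS n hn.le
  have hxM := hxS M le_rfl
  have hD0 : 0 ≤ D := (norm_nonneg _).trans (hD _ hxn _ hxn)
  have hM : (1 : ℝ) ≤ M := by exact_mod_cast hn.pos
  have hanti := antitoneOn_of_isPolyCDStep hconv.1 hgrad hlip hxS hsteps
  have hfM : f (x M) ≤ f (x (n + 1)) := hanti (mem_Iic.2 hn) (mem_Iic.2 le_rfl) hn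
  have hf0 : f (x n) ≤ f (x 0) := hanti (mem_Iic.2 M.zero_le) (mem_Iic.2 hn.le) n.zero_le
  have hfn : f (x (n + 1)) ≤ f (x n) := hanti (mem_Iic.2 hn.le) (mem_Iic.2 hn) n.le_succ
  have hpath : L * ‖x M - x n‖ ≤ √(2 * M * L * (f (x 0) - f (x M))) := by
    have := mul_norm_sub_sq_le_of_forall_Ico (half_pos hL).le hn.le fun j hj =>
      have hj := (Finset.mem_Ico.1 hj).2
      (hsteps j hj).mul_norm_sub_sq_le hconv.1 hgrad hlip (hxS j hj.le) (hxS _ hj)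
    have hMn : ((M - n : ℕ) : ℝ) ≤ M := by exact_mod_cast M.sub_le n
    refine Real.le_sqrt_of_sq_le ?_
    nlinarith [mul_le_mul hMn (sub_le_sub_right hf0 (f (x M))) (by linarith) (by linarith)]
  have hsqrt : ‖v (n + 1) - x n‖ * √(2 * L * (f (x n) - f (x (n + 1)))) ≤
      D * √(2 * M * L * (f (x 0) - f (x M))) := by
    gcongr
    · exact hD _ hvS _ hxn
    · nlinarith
  have hvert := (hsteps n hn).inner_sub_le hconv.1 hL.le hgrad hlip hxn (hxS _ hn)
  have hcross : ⟪g (x M) - g (x n), x M - v (n + 1)⟫ ≤ L * ‖x M - x n‖ * D :=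
    (real_inner_le_norm _ _).trans
      (mul_le_mul (hlip _ hxM _ hxn) (hD _ hxM _ hvS) (norm_nonneg _) (by positivity))
  have hgap := hconv.sub_le_inner_gradient hxn hxM (hgrad _ hxn)
  have hsplit : ⟪g (x M), x M - v (n + 1)⟫ = ⟪g (x n), x n - v (n + 1)⟫ +
      ⟪g (x M) - g (x n), x M - v (n + 1)⟫ - ⟪g (x n), x n - x M⟫ := by
    simp only [inner_sub_left, inner_sub_right]; ring
  linarith [mul_le_mul_of_nonneg_right hpath hD0]

end Cycle

end InnerProductSpace

theorem stmt11_general {d : ℕ} (M : ℕ)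
    (v : ℕ → EuclideanSpace ℝ (Fin d))
    (S : Set (EuclideanSpace ℝ (Fin d)))
    (hSdef : S = convexHull ℝ (v '' Set.Icc 1 M))
    (D L : ℝ) (hL : 0 < L) (hD : ∀ a ∈ S, ∀ b ∈ S, ‖a - b‖ ≤ D)
    (f : EuclideanSpace ℝ (Fin d) → ℝ)
    (g : EuclideanSpace ℝ (Fin d) → EuclideanSpace ℝ (Fin d))
    (hconv : ConvexOn ℝ S f)
    (hgrad : ∀ y ∈ S, HasGradientAt f (g y) y)
    (hlip : ∀ a ∈ S, ∀ b ∈ S, ‖g a - g b‖ ≤ L * ‖a - b‖)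
    (xstar : EuclideanSpace ℝ (Fin d)) (hxs : xstar ∈ S)
    (hmin : ∀ y ∈ S, f xstar ≤ f y)
    (x : ℕ → EuclideanSpace ℝ (Fin d)) (hx0 : x 0 ∈ S)
    (α : ℕ → ℝ)
    (hstep : ∀ k, 1 ≤ k → k ≤ M →
      α k ∈ Set.Icc (0 : ℝ) 1 ∧
      x k = x (k - 1) + α k • (v k - x (k - 1)) ∧
      ∀ β ∈ Set.Icc (0 : ℝ) 1,
        α k * ⟪g (x (k - 1)), v k - x (k - 1)⟫ +
          L * (α k) ^ 2 / 2 * ‖v k - x (k - 1)‖ ^ 2 ≤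
        β * ⟪g (x (k - 1)), v k - x (k - 1)⟫ +
          L * β ^ 2 / 2 * ‖v k - x (k - 1)‖ ^ 2) :
    (f (x M) - f xstar) ^ 2 ≤ 8 * M * L * D ^ 2 * (f (x 0) - f (x M)) := by
  have hS : Convex ℝ S := hSdef ▸ convex_convexHull ℝ _
  have hvS : ∀ k ∈ Icc 1 M, v k ∈ S := fun k hk => hSdef ▸ subset_convexHull ℝ _ ⟨k, hk, rfl⟩
  have hsteps : ∀ n < M, IsPolyCDStep L g (x n) (v (n + 1)) (α (n + 1)) (x (n + 1)) := by
    intro n hn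
    have := hstep (n + 1) n.succ_pos hn
    rwa [Nat.add_sub_cancel] at this
  have hxS : ∀ k ≤ M, x k ∈ S := by
    intro k hk
    induction k with
    | zero => exact hx0
    | succ n ih => exact (hsteps n hk).mem hS (ih (by omega)) (hvS _ ⟨n.succ_pos, hk⟩)
  set B := 2 * D * √(2 * M * L * (f (x 0) - f (x M)))
  have hvert : ∀ w ∈ v '' Icc 1 M, ⟪g (x M), x M - w⟫ ≤ B := by
    rintro _ ⟨k, ⟨hk1, hkM⟩, rfl⟩
    obtain ⟨n, rfl⟩ := Nat.exists_eq_add_of_le' hk1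
    exact hconv.inner_gradient_sub_vertex_le hL hgrad hlip hD hkM hxS (hvS _ ⟨hk1, hkM⟩) hsteps
  have hgap : f (x M) - f xstar ≤ B :=
    (hconv.sub_le_inner_gradient (hxS M le_rfl) hxs (hgrad _ (hxS M le_rfl))).trans
      (inner_sub_le_of_mem_convexHull_s11 hvert (hSdef ▸ hxs))
  have hΔ : 0 ≤ f (x 0) - f (x M) := sub_nonneg.2 <|
    antitoneOn_of_isPolyCDStep hS hgrad hlip hxS hsteps (mem_Iic.2 M.zero_le) (mem_Iic.2 le_rfl)
      M.zero_le
  calc (f (x M) - f xstar) ^ 2 ≤ B ^ 2 :=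
        pow_le_pow_left₀ (sub_nonneg.2 (hmin _ (hxS M le_rfl))) hgap 2
    _ = 8 * M * L * D ^ 2 * (f (x 0) - f (x M)) := by
        rw [mul_pow, Real.sq_sqrt (by positivity)]; ring

theorem stmt11 {d : ℕ} (M : ℕ) (hM : 1 ≤ M)
    (v : ℕ → EuclideanSpace ℝ (Fin d))
    (S : Set (EuclideanSpace ℝ (Fin d)))
    (hSdef : S = convexHull ℝ (v '' Set.Icc 1 M))
    (D L : ℝ) (hL : 0 < L) (hD : ∀ a ∈ S, ∀ b ∈ S, ‖a - b‖ ≤ D)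
    (f : EuclideanSpace ℝ (Fin d) → ℝ)
    (g : EuclideanSpace ℝ (Fin d) → EuclideanSpace ℝ (Fin d))
    (hconv : ConvexOn ℝ S f)
    (hgrad : ∀ y ∈ S, HasGradientAt f (g y) y)
    (hlip : ∀ a ∈ S, ∀ b ∈ S, ‖g a - g b‖ ≤ L * ‖a - b‖)
    (xstar : EuclideanSpace ℝ (Fin d)) (hxs : xstar ∈ S)
    (hmin : ∀ y ∈ S, f xstar ≤ f y)
    (x : ℕ → EuclideanSpace ℝ (Fin d)) (hx0 : x 0 ∈ S)
    (α : ℕ → ℝ)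
    (hstep : ∀ k, 1 ≤ k → k ≤ M →
      α k ∈ Set.Icc (0 : ℝ) 1 ∧
      x k = x (k - 1) + α k • (v k - x (k - 1)) ∧
      ∀ β ∈ Set.Icc (0 : ℝ) 1,
        α k * ⟪g (x (k - 1)), v k - x (k - 1)⟫ +
          L * (α k) ^ 2 / 2 * ‖v k - x (k - 1)‖ ^ 2 ≤
        β * ⟪g (x (k - 1)), v k - x (k - 1)⟫ +
          L * β ^ 2 / 2 * ‖v k - x (k - 1)‖ ^ 2) :
    (f (x M) - f xstar) ^ 2 ≤ 8 * M * L * D ^ 2 * (f (x 0) - f (x M)) :=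
  stmt11_general M v S hSdef D L hL hD f g hconv hgrad hlip xstar hxs hmin x hx0 α hstep
end

section
/- Let f be μ-strongly convex and differentiable on a polytope S = conv{v^1,…,v^M} with facial distance ψ_S, let x* be the minimizer of f over S, and let x ∈ S with decomposition x = ∑_j λ_j v^j, λ ∈ Δ_M, with vertex-support V := {j : λ_j > 0}. Then there exist η ∈ [0,2], j₁ ∈ V and j₂ ∈ [M] such that f(x) - f(x*) ≤ (η/2)⟨∇f(x), v^{j₁} - v^{j₂}⟩ - (μψ_S²/8)η². -/
/-!
Among all representations `lams` of `xstar` choose one closest to `lam` in `ℓ₁`, and split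
`lam - lams = s • (p - q)` with `p, q` in the simplex, `s = ‖lam - lams‖₁ / 2` and `p` supported
where `lam > lams`. If a vertex `v k` in the support of `p` lay in the smallest face of the
polytope containing `∑ q j • v j`, part of the mass of `lams` could be moved onto `v k` without
changing the represented point, bringing it closer to `lam`. So that face separates the two
halves, and `‖x - xstar‖ = s * ‖∑ p j • v j - ∑ q j • v j‖ ≥ s * ψ`. Strong convexity gives
`f x - f xstar ≤ ⟪g x, x - xstar⟫ - μ / 2 * ‖x - xstar‖ ^ 2`, and
`⟪g x, x - xstar⟫ ≤ s * ⟪g x, v j₁ - v j₂⟫` for the best vertex `j₁` in the support of `lam` and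
the worst vertex `j₂`; take `η = 2 * s`.
-/

open scoped RealInnerProductSpace

/-- The facial distance of a polytope with vertex set `V`:
the infimum over proper nonempty faces `F` of the distance between `F`
and the convex hull of the vertices outside `F`. -/
noncomputable def facialDist {d : ℕ} (V : Set (EuclideanSpace ℝ (Fin d))) : ℝ :=
  sInf { r : ℝ | ∃ F : Set (EuclideanSpace ℝ (Fin d)),
    IsExtreme ℝ (convexHull ℝ V) F ∧ F.Nonempty ∧ F ≠ convexHull ℝ V ∧
    r = sInf { t : ℝ | ∃ a ∈ F, ∃ b ∈ convexHull ℝ (V \ F), t = dist a b } }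

open Finset

section WeightVectors

variable {ι : Type*} [Fintype ι]

lemma sum_sub_eq_zero_of_mem_stdSimplex {lam lams : ι → ℝ} (hlam : lam ∈ stdSimplex ℝ ι)
    (hlams : lams ∈ stdSimplex ℝ ι) : ∑ j, (lam j - lams j) = 0 := by
  rw [sum_sub_distrib, hlam.2, hlams.2, sub_self]

lemma sum_posPart_eq_sum_negPart {δ : ι → ℝ} (h : ∑ j, δ j = 0) :
    ∑ j, (δ j)⁺ = ∑ j, (δ j)⁻ := by
  rw [← sub_eq_zero, ← sum_sub_distrib]
  simpa only [posPart_sub_negPart] using h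

lemma sum_abs_eq_two_mul_sum_posPart {δ : ι → ℝ} (h : ∑ j, δ j = 0) :
    ∑ j, |δ j| = 2 * ∑ j, (δ j)⁺ := by
  simp only [← posPart_add_negPart, sum_add_distrib, ← sum_posPart_eq_sum_negPart h]
  ring

lemma sum_abs_sub_le_sum_add_sum_sub {u t : ι → ℝ} (hu : 0 ≤ u) (ht : 0 ≤ t) {k : ι}
    (hk : t k ≤ u k) : ∑ j, |u j - t j| ≤ ∑ j, u j + ∑ j, t j - 2 * t k := by
  classical
  have hbound : ∀ j, |u j - t j| ≤ u j + t j - if j = k then 2 * t k else 0 := by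
    intro j
    split_ifs with hj
    · subst hj; rw [abs_of_nonneg (by linarith)]; linarith
    · have huj : 0 ≤ u j := hu j
      have htj : 0 ≤ t j := ht j
      rw [sub_zero, abs_le]; constructor <;> linarith
  calc ∑ j, |u j - t j| ≤ ∑ j, (u j + t j - if j = k then 2 * t k else 0) :=
        sum_le_sum fun j _ => hbound j
    _ = ∑ j, u j + ∑ j, t j - 2 * t k := by
        rw [sum_sub_distrib, sum_add_distrib, sum_ite_eq' univ k, if_pos (mem_univ k)]

lemma sum_sub_mul_le_sum_posPart_mul {lam lams a : ι → ℝ} (hlams : 0 ≤ lams)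
    (hsum : ∑ j, lam j = ∑ j, lams j) {j₁ j₂ : ι} (h₁ : ∀ j, 0 < lam j → a j ≤ a j₁)
    (h₂ : ∀ j, a j₂ ≤ a j) :
    ∑ j, (lam j - lams j) * a j ≤ (∑ j, (lam j - lams j)⁺) * (a j₁ - a j₂) := by
  have hδ : ∑ j, (lam j - lams j) = 0 := by rw [sum_sub_distrib, hsum, sub_self]
  have hpos : ∑ j, (lam j - lams j)⁺ * a j ≤ (∑ j, (lam j - lams j)⁺) * a j₁ := by
    rw [sum_mul]
    refine sum_le_sum fun j _ => ?_
    rcases (posPart_nonneg (lam j - lams j)).eq_or_lt with h | h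
    · simp [← h]
    · have hlamj : 0 < lam j := (hlams j).trans_lt (sub_pos.mp (posPart_pos_iff.mp h))
      exact mul_le_mul_of_nonneg_left (h₁ j hlamj) h.le
  have hneg : (∑ j, (lam j - lams j)⁻) * a j₂ ≤ ∑ j, (lam j - lams j)⁻ * a j := by
    rw [sum_mul]
    exact sum_le_sum fun j _ => mul_le_mul_of_nonneg_left (h₂ j) (negPart_nonneg _)
  calc ∑ j, (lam j - lams j) * a j
      = ∑ j, (lam j - lams j)⁺ * a j - ∑ j, (lam j - lams j)⁻ * a j := by
        simp only [← sum_sub_distrib, ← sub_mul, posPart_sub_negPart]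
    _ ≤ _ := by rw [← sum_posPart_eq_sum_negPart hδ] at hneg; linarith

lemma sum_posPart_sub_le_one {lam lams : ι → ℝ} (hlam : lam ∈ stdSimplex ℝ ι)
    (hlams : lams ∈ stdSimplex ℝ ι) : ∑ j, (lam j - lams j)⁺ ≤ 1 :=
  hlam.2 ▸ sum_le_sum fun j _ => sup_le (by linarith [hlams.1 j]) (hlam.1 j)

lemma sum_abs_posPart_sub_sub_negPart_lt {δ r : ι → ℝ} (hδ : ∑ j, δ j = 0)
    (hr : r ∈ stdSimplex ℝ ι) {k : ι} (hδk : 0 < δ k) (hrk : 0 < r k) {θ : ℝ} (hθ1 : θ ≤ 1)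
    (hθs : θ * ∑ j, (δ j)⁺ = δ k) :
    ∑ j, |(δ j)⁺ - δ k * r j - (1 - θ) * (δ j)⁻| < ∑ j, |δ j| := by
  have hmass : δ k * r k ≤ (δ k)⁺ := by
    rw [posPart_eq_self.mpr hδk.le]
    exact mul_le_of_le_one_right hδk.le (mem_Icc_of_mem_stdSimplex hr k).2
  have hmove := sum_abs_sub_le_sum_add_sum_sub (u := fun j => (δ j)⁺) (t := fun j => δ k * r j)
    (fun j => posPart_nonneg _) (fun j => mul_nonneg hδk.le (hr.1 j)) hmass
  rw [← mul_sum, hr.2, mul_one] at hmove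
  calc ∑ j, |(δ j)⁺ - δ k * r j - (1 - θ) * (δ j)⁻|
      ≤ ∑ j, (|(δ j)⁺ - δ k * r j| + (1 - θ) * (δ j)⁻) := by
        refine sum_le_sum fun j _ => (abs_sub _ _).trans_eq ?_
        rw [abs_of_nonneg (mul_nonneg (sub_nonneg.mpr hθ1) (negPart_nonneg (δ j)))]
    _ = ∑ j, |(δ j)⁺ - δ k * r j| + (1 - θ) * ∑ j, (δ j)⁺ := by
        rw [sum_add_distrib, ← mul_sum, sum_posPart_eq_sum_negPart hδ]
    _ < 2 * ∑ j, (δ j)⁺ := by linarith [mul_pos hδk hrk]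
    _ = ∑ j, |δ j| := (sum_abs_eq_two_mul_sum_posPart hδ).symm

lemma exists_stdSimplex_sum_abs_sub_lt {E : Type*} [AddCommGroup E] [Module ℝ E] (v : ι → E)
    {lam lams r : ι → ℝ} (hlam : lam ∈ stdSimplex ℝ ι) (hlams : lams ∈ stdSimplex ℝ ι)
    (hr : r ∈ stdSimplex ℝ ι) {k : ι} (hk : lams k < lam k) (hrk : 0 < r k)
    (hrv : (∑ j, (lam j - lams j)⁺) • ∑ j, r j • v j = ∑ j, (lam j - lams j)⁻ • v j) :
    ∃ m ∈ stdSimplex ℝ ι, ∑ j, m j • v j = ∑ j, lams j • v j ∧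
      ∑ j, |lam j - m j| < ∑ j, |lam j - lams j| := by
  set δ : ι → ℝ := fun j => lam j - lams j with hδ
  set s := ∑ j, (δ j)⁺
  have hδsum : ∑ j, δ j = 0 := sum_sub_eq_zero_of_mem_stdSimplex hlam hlams
  have hneg : ∑ j, (δ j)⁻ = s := (sum_posPart_eq_sum_negPart hδsum).symm
  have hδk : 0 < δ k := sub_pos.mpr hk
  have hδk_le : δ k ≤ s := by
    simpa only [posPart_eq_self.mpr hδk.le] using
      single_le_sum (fun j _ => posPart_nonneg (δ j)) (mem_univ k)
  have hs : 0 < s := hδk.trans_le hδk_le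
  set θ := δ k / s
  have hθs : θ * s = δ k := div_mul_cancel₀ _ hs.ne'
  have hθ1 : θ ≤ 1 := (div_le_one hs).mpr hδk_le
  -- trade the fraction `θ` of the excess `δ⁻` of `lams` for `δ k • r`, which by `hrv`
  -- represents the same point and puts weight on the vertex `k`, where `lams` is short
  refine ⟨fun j => lams j - θ * (δ j)⁻ + δ k * r j, ⟨fun j => ?_, ?_⟩, ?_, ?_⟩
  · have hnegj : (δ j)⁻ ≤ lams j := sup_le (by linarith [hlam.1 j]) (hlams.1 j)
    have := mul_le_of_le_one_left (negPart_nonneg (δ j)) hθ1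
    have := mul_nonneg hδk.le (hr.1 j)
    linarith
  · simp only [sum_add_distrib, sum_sub_distrib, ← mul_sum, hlams.2, hneg, hr.2, hθs]
    ring
  · simp only [add_smul, sub_smul, sum_add_distrib, sum_sub_distrib, mul_smul, ← smul_sum]
    rw [show ∑ j, (δ j)⁻ • v j = s • ∑ j, r j • v j from hrv.symm, smul_smul, hθs, sub_add_cancel]
  · calc ∑ j, |lam j - (lams j - θ * (δ j)⁻ + δ k * r j)|
        = ∑ j, |(δ j)⁺ - δ k * r j - (1 - θ) * (δ j)⁻| := sum_congr rfl fun j _ => by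
          have := posPart_sub_negPart (δ j)
          simp only [hδ] at this ⊢
          congr 1
          linarith
      _ < ∑ j, |lam j - lams j| := sum_abs_posPart_sub_sub_negPart_lt hδsum hr hδk hrk hθ1 hθs

end WeightVectors

section MinimalFace

variable {E : Type*} [AddCommGroup E] [Module ℝ E]

def minimalFace (S : Set E) (q : E) : Set E :=
  {y | y ∈ S ∧ ∃ z ∈ S, q ∈ openSegment ℝ y z}

lemma mem_minimalFace_self {S : Set E} {q : E} (hq : q ∈ S) : q ∈ minimalFace S q :=
  ⟨hq, q, hq, by rw [openSegment_same]; exact Set.mem_singleton q⟩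

lemma Convex.exists_mem_openSegment_left {S : Set E} (hS : Convex ℝ S) {q y z y₁ y₂ : E}
    (hy₂ : y₂ ∈ S) (hz : z ∈ S) (hy : y ∈ openSegment ℝ y₁ y₂) (hq : q ∈ openSegment ℝ y z) :
    ∃ z₁ ∈ S, q ∈ openSegment ℝ y₁ z₁ := by
  obtain ⟨t₁, t₂, ht₁, ht₂, ht, rfl⟩ := hy
  obtain ⟨a, b, ha, hb, hab, rfl⟩ := hq
  have he : 0 < 1 - a * t₁ := by nlinarith
  refine ⟨(1 - a * t₁)⁻¹ • ((a * t₂) • y₂ + b • z), ?_, a * t₁, 1 - a * t₁, by positivity, he,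
    by ring, ?_⟩
  · have hsum : a * t₂ * (1 - a * t₁)⁻¹ + b * (1 - a * t₁)⁻¹ = 1 := by
      field_simp
      nlinarith
    convert hS hy₂ hz (by positivity) (by positivity) hsum using 1
    module
  · rw [smul_smul, mul_inv_cancel₀ he.ne', one_smul]
    module

lemma Convex.isExtreme_minimalFace {S : Set E} (hS : Convex ℝ S) (q : E) :
    IsExtreme ℝ S (minimalFace S q) := by
  refine ⟨fun y hy => hy.1, ?_⟩
  rintro y₁ hy₁ y₂ hy₂ y ⟨-, z, hz, hq⟩ hy
  exact ⟨hy₁, hS.exists_mem_openSegment_left hy₂ hz hy hq⟩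

end MinimalFace

lemma Finset.centerMass_mem_convexHull_of_ne_zero {ι E : Type*} [AddCommGroup E] [Module ℝ E]
    (t : Finset ι) {w : ι → ℝ} (hw₀ : ∀ i ∈ t, 0 ≤ w i) (hws : 0 < ∑ i ∈ t, w i) {z : ι → E}
    {s : Set E} (hz : ∀ i ∈ t, w i ≠ 0 → z i ∈ s) : t.centerMass w z ∈ convexHull ℝ s := by
  classical
  rw [← centerMass_filter_ne_zero]
  refine centerMass_mem_convexHull _ (fun i hi => hw₀ i (mem_filter.1 hi).1) ?_
    fun i hi => hz i (mem_filter.1 hi).1 (mem_filter.1 hi).2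
  rwa [sum_filter_ne_zero]

section Representations

variable {ι E : Type*} [Fintype ι]

lemma exists_stdSimplex_sum_smul_eq [AddCommGroup E] [Module ℝ E] (v : ι → E) {y : E}
    (hy : y ∈ convexHull ℝ (Set.range v)) : ∃ m ∈ stdSimplex ℝ ι, ∑ j, m j • v j = y := by
  classical
  have hrange :
      Set.range v = Fintype.linearCombination ℝ v '' Set.range fun i => Pi.single i 1 := by
    rw [← Set.range_comp]
    congr 1
    ext i
    simp [Fintype.linearCombination_apply_single]
  rw [hrange, ← LinearMap.image_convexHull, convexHull_rangle_single_eq_stdSimplex] at hy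
  obtain ⟨m, hm, rfl⟩ := hy
  exact ⟨m, hm, (Fintype.linearCombination_apply ℝ v m).symm⟩

lemma exists_stdSimplex_sum_smul_eq_and_sum_abs_sub_le [NormedAddCommGroup E] [NormedSpace ℝ E]
    (v : ι → E) (lam : ι → ℝ) {y : E} (hy : y ∈ convexHull ℝ (Set.range v)) :
    ∃ lams ∈ stdSimplex ℝ ι, ∑ j, lams j • v j = y ∧
      ∀ m ∈ stdSimplex ℝ ι, ∑ j, m j • v j = y → ∑ j, |lam j - lams j| ≤ ∑ j, |lam j - m j| := by
  have hcompact : IsCompact (stdSimplex ℝ ι ∩ (fun m : ι → ℝ => ∑ j, m j • v j) ⁻¹' {y}) :=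
    (isCompact_stdSimplex ℝ ι).inter_right <| isClosed_singleton.preimage <| by fun_prop
  have hcont : Continuous fun m : ι → ℝ => ∑ j, |lam j - m j| := by fun_prop
  obtain ⟨lams, ⟨hlams, hlamsy⟩, hmin⟩ :=
    hcompact.exists_isMinOn (exists_stdSimplex_sum_smul_eq v hy) hcont.continuousOn
  exact ⟨lams, hlams, hlamsy, fun m hm hmy => hmin ⟨hm, hmy⟩⟩

lemma notMem_minimalFace_of_forall_sum_abs_sub_le [AddCommGroup E] [Module ℝ E] (v : ι → E)
    {lam lams : ι → ℝ} (hlam : lam ∈ stdSimplex ℝ ι) (hlams : lams ∈ stdSimplex ℝ ι)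
    (hclosest : ∀ m ∈ stdSimplex ℝ ι, ∑ j, m j • v j = ∑ j, lams j • v j →
      ∑ j, |lam j - lams j| ≤ ∑ j, |lam j - m j|) {k : ι} (hk : lams k < lam k) :
    v k ∉ minimalFace (convexHull ℝ (Set.range v))
      (univ.centerMass (fun j => (lam j - lams j)⁻) v) := by
  classical
  rintro ⟨-, z, hz, a, b, ha, hb, hab, hq⟩
  obtain ⟨c, hc, hcz⟩ := exists_stdSimplex_sum_smul_eq v hz
  have hs : 0 < ∑ j, (lam j - lams j)⁺ :=
    (posPart_pos (sub_pos.mpr hk)).trans_le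
      (single_le_sum (f := fun j => (lam j - lams j)⁺) (fun j _ => posPart_nonneg _) (mem_univ k))
  set r : ι → ℝ := a • Pi.single k 1 + b • c
  have hr : r ∈ stdSimplex ℝ ι :=
    convex_stdSimplex ℝ ι (single_mem_stdSimplex ℝ k) hc ha.le hb.le hab
  have hrk : 0 < r k := by
    have := mul_nonneg hb.le (hc.1 k)
    simp only [r, Pi.add_apply, Pi.smul_apply, Pi.single_eq_same, smul_eq_mul, mul_one]
    linarith
  have hrv : ∑ j, r j • v j = a • v k + b • z := by
    simp only [r, Pi.add_apply, Pi.smul_apply, smul_eq_mul, add_smul, mul_smul, sum_add_distrib,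
      ← smul_sum, hcz, Pi.single_apply, ite_smul, one_smul, zero_smul, sum_ite_eq', mem_univ,
      if_true]
  obtain ⟨m, hm, hmv, hlt⟩ := exists_stdSimplex_sum_abs_sub_lt v hlam hlams hr hk hrk
    (by rw [hrv, hq, centerMass, ← sum_posPart_eq_sum_negPart
      (sum_sub_eq_zero_of_mem_stdSimplex hlam hlams), smul_inv_smul₀ hs.ne'])
  exact (hclosest m hm hmv).not_gt hlt

end Representations

section FacialDistance

variable {d : ℕ}

lemma facialDist_nonneg (V : Set (EuclideanSpace ℝ (Fin d))) : 0 ≤ facialDist V :=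
  Real.sInf_nonneg <| by
    rintro _ ⟨F, -, -, -, rfl⟩
    exact Real.sInf_nonneg <| by rintro _ ⟨a, -, b, -, rfl⟩; exact dist_nonneg

lemma facialDist_le_dist {V F : Set (EuclideanSpace ℝ (Fin d))}
    (hF : IsExtreme ℝ (convexHull ℝ V) F) (hFV : F ≠ convexHull ℝ V)
    {a b : EuclideanSpace ℝ (Fin d)} (ha : a ∈ F) (hb : b ∈ convexHull ℝ (V \ F)) :
    facialDist V ≤ dist a b := by
  have hdist_nonneg : ∀ F' : Set (EuclideanSpace ℝ (Fin d)),
      ∀ t ∈ {t : ℝ | ∃ a ∈ F', ∃ b ∈ convexHull ℝ (V \ F'), t = dist a b}, 0 ≤ t := by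
    rintro F' _ ⟨a, -, b, -, rfl⟩
    exact dist_nonneg
  calc facialDist V ≤ sInf {t : ℝ | ∃ a ∈ F, ∃ b ∈ convexHull ℝ (V \ F), t = dist a b} := by
        refine csInf_le ⟨0, ?_⟩ ⟨F, hF, ⟨a, ha⟩, hFV, rfl⟩
        rintro _ ⟨F', -, -, -, rfl⟩
        exact Real.sInf_nonneg (hdist_nonneg F')
    _ ≤ dist a b := csInf_le ⟨0, hdist_nonneg F⟩ ⟨a, ha, b, hb, rfl⟩

variable {ι : Type*} [Fintype ι]

theorem exists_stdSimplex_facialDist_mul_sum_abs_sub_le (v : ι → EuclideanSpace ℝ (Fin d))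
    {lam : ι → ℝ} (hlam : lam ∈ stdSimplex ℝ ι) {y : EuclideanSpace ℝ (Fin d)}
    (hy : y ∈ convexHull ℝ (Set.range v)) :
    ∃ lams ∈ stdSimplex ℝ ι, ∑ j, lams j • v j = y ∧
      facialDist (Set.range v) / 2 * ∑ j, |lam j - lams j| ≤ ‖∑ j, lam j • v j - y‖ := by
  obtain ⟨lams, hlams, rfl, hclosest⟩ := exists_stdSimplex_sum_smul_eq_and_sum_abs_sub_le v lam hy
  refine ⟨lams, hlams, rfl, ?_⟩
  set δ : ι → ℝ := fun j => lam j - lams j with hδ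
  set s := ∑ j, (δ j)⁺
  have hδsum : ∑ j, δ j = 0 := sum_sub_eq_zero_of_mem_stdSimplex hlam hlams
  have hneg : ∑ j, (δ j)⁻ = s := (sum_posPart_eq_sum_negPart hδsum).symm
  rw [sum_abs_eq_two_mul_sum_posPart hδsum]
  rcases (sum_nonneg fun j _ => posPart_nonneg (δ j) : 0 ≤ s).eq_or_lt with hs | hs
  · rw [← hs]; simp
  set S := convexHull ℝ (Set.range v)
  set q := univ.centerMass (fun j => (δ j)⁻) v
  set p := univ.centerMass (fun j => (δ j)⁺) v
  have hsupp : ∀ j, (δ j)⁺ ≠ 0 → lams j < lam j :=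
    fun j hj => sub_pos.mp (posPart_pos_iff.mp ((posPart_nonneg _).lt_of_ne' hj))
  have hvG : ∀ j, (δ j)⁺ ≠ 0 → v j ∉ minimalFace S q := fun j hj =>
    notMem_minimalFace_of_forall_sum_abs_sub_le v hlam hlams hclosest (hsupp j hj)
  have hqS : q ∈ S := univ.centerMass_mem_convexHull (fun j _ => negPart_nonneg (δ j)) (hneg ▸ hs)
    fun j _ => Set.mem_range_self j
  have hpS : p ∈ convexHull ℝ (Set.range v \ minimalFace S q) :=
    univ.centerMass_mem_convexHull_of_ne_zero (fun j _ => posPart_nonneg (δ j)) hs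
      fun j _ hj => ⟨Set.mem_range_self j, hvG j hj⟩
  obtain ⟨k, -, hk⟩ := exists_lt_of_sum_lt (by simpa using hs : ∑ j, (0 : ℝ) < s)
  have hGS : minimalFace S q ≠ S := fun h =>
    hvG k hk.ne' (by rw [h]; exact subset_convexHull ℝ _ (Set.mem_range_self k))
  have hψ := facialDist_le_dist ((convex_convexHull ℝ _).isExtreme_minimalFace q) hGS
    (mem_minimalFace_self hqS) hpS
  have hxy : ∑ j, lam j • v j - ∑ j, lams j • v j = s • (p - q) := by
    change _ = s • (s⁻¹ • _ - (∑ j, (δ j)⁻)⁻¹ • _)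
    rw [hneg, smul_sub, smul_inv_smul₀ hs.ne', smul_inv_smul₀ hs.ne', ← sum_sub_distrib,
      ← sum_sub_distrib]
    simp only [← sub_smul, posPart_sub_negPart, hδ]
  rw [hxy, norm_smul, Real.norm_of_nonneg hs.le, ← dist_eq_norm, dist_comm]
  nlinarith

end FacialDistance

lemma exists_inner_sum_sub_le_sum_posPart_mul {ι F : Type*} [Fintype ι] [NormedAddCommGroup F]
    [InnerProductSpace ℝ F] (w : F) (v : ι → F) {lam lams : ι → ℝ}
    (hlam : lam ∈ stdSimplex ℝ ι) (hlams : lams ∈ stdSimplex ℝ ι) :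
    ∃ j₁, 0 < lam j₁ ∧ ∃ j₂, ⟪w, ∑ j, lam j • v j - ∑ j, lams j • v j⟫ ≤
      (∑ j, (lam j - lams j)⁺) * ⟪w, v j₁ - v j₂⟫ := by
  obtain ⟨j₀, -, hj₀⟩ := exists_lt_of_sum_lt (by simp [hlam.2] : ∑ j, (0 : ℝ) < ∑ j, lam j)
  obtain ⟨j₁, hj₁, hmax⟩ := (univ.filter fun j => 0 < lam j).exists_max_image
    (fun j => ⟪w, v j⟫) ⟨j₀, mem_filter.mpr ⟨mem_univ _, hj₀⟩⟩
  obtain ⟨j₂, -, hmin⟩ := univ.exists_min_image (fun j => ⟪w, v j⟫) ⟨j₁, mem_univ _⟩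
  refine ⟨j₁, (mem_filter.mp hj₁).2, j₂, ?_⟩
  rw [← sum_sub_distrib, inner_sum, inner_sub_right]
  simp only [← sub_smul, real_inner_smul_right]
  exact sum_sub_mul_le_sum_posPart_mul hlams.1 (by rw [hlam.2, hlams.2])
    (fun j hj => hmax j (mem_filter.mpr ⟨mem_univ _, hj⟩)) (fun j => hmin j (mem_univ _))

theorem stmt14_general {d M : ℕ} (v : Fin M → EuclideanSpace ℝ (Fin d))
    (S : Set (EuclideanSpace ℝ (Fin d))) (hSdef : S = convexHull ℝ (Set.range v))
    (μ : ℝ) (hμ : 0 < μ)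
    (f : EuclideanSpace ℝ (Fin d) → ℝ)
    (g : EuclideanSpace ℝ (Fin d) → EuclideanSpace ℝ (Fin d))
    (hsc : ∀ a ∈ S, ∀ b ∈ S, f b ≥ f a + ⟪g a, b - a⟫ + μ / 2 * ‖b - a‖ ^ 2)
    (xstar : EuclideanSpace ℝ (Fin d)) (hxs : xstar ∈ S)
    (lam : Fin M → ℝ) (hlam : lam ∈ stdSimplex ℝ (Fin M))
    (x : EuclideanSpace ℝ (Fin d)) (hx : x = ∑ j, lam j • v j) :
    ∃ η ∈ Set.Icc (0 : ℝ) 2, ∃ j₁ : Fin M, 0 < lam j₁ ∧ ∃ j₂ : Fin M,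
      f x - f xstar ≤
        η / 2 * ⟪g x, v j₁ - v j₂⟫ - μ * (facialDist (Set.range v)) ^ 2 / 8 * η ^ 2 := by
  subst hSdef
  have hxS : x ∈ convexHull ℝ (Set.range v) := hx ▸ (convex_convexHull ℝ _).sum_mem
    (fun j _ => hlam.1 j) hlam.2 fun j _ => subset_convexHull ℝ _ (Set.mem_range_self j)
  obtain ⟨lams, hlams, rfl, hψ⟩ := exists_stdSimplex_facialDist_mul_sum_abs_sub_le v hlam hxs
  obtain ⟨j₁, hj₁, j₂, hinner⟩ := exists_inner_sum_sub_le_sum_posPart_mul (g x) v hlam hlams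
  rw [← hx] at hinner
  set ψ := facialDist (Set.range v)
  set s := ∑ j, (lam j - lams j)⁺
  rw [sum_abs_eq_two_mul_sum_posPart (sum_sub_eq_zero_of_mem_stdSimplex hlam hlams), ← hx] at hψ
  have hgap := hsc x hxS _ hxs
  rw [← neg_sub, inner_neg_right, norm_neg] at hgap
  have hsq : μ / 2 * (ψ * s) ^ 2 ≤ μ / 2 * ‖x - ∑ j, lams j • v j‖ ^ 2 := by
    gcongr
    · exact mul_nonneg (facialDist_nonneg _) (sum_nonneg fun j _ => posPart_nonneg _)
    · linarith
  refine ⟨2 * s, ⟨by positivity, by linarith [sum_posPart_sub_le_one hlam hlams]⟩, j₁, hj₁, j₂, ?_⟩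
  calc f x - f (∑ j, lams j • v j)
      ≤ ⟪g x, x - ∑ j, lams j • v j⟫ - μ / 2 * ‖x - ∑ j, lams j • v j‖ ^ 2 := by linarith
    _ ≤ s * ⟪g x, v j₁ - v j₂⟫ - μ / 2 * (ψ * s) ^ 2 := by linarith
    _ = 2 * s / 2 * ⟪g x, v j₁ - v j₂⟫ - μ * ψ ^ 2 / 8 * (2 * s) ^ 2 := by ring

theorem stmt14 {d M : ℕ} (v : Fin M → EuclideanSpace ℝ (Fin d))
    (S : Set (EuclideanSpace ℝ (Fin d))) (hSdef : S = convexHull ℝ (Set.range v))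
    (μ : ℝ) (hμ : 0 < μ)
    (f : EuclideanSpace ℝ (Fin d) → ℝ)
    (g : EuclideanSpace ℝ (Fin d) → EuclideanSpace ℝ (Fin d))
    (hgrad : ∀ y ∈ S, HasGradientAt f (g y) y)
    (hsc : ∀ a ∈ S, ∀ b ∈ S, f b ≥ f a + ⟪g a, b - a⟫ + μ / 2 * ‖b - a‖ ^ 2)
    (xstar : EuclideanSpace ℝ (Fin d)) (hxs : xstar ∈ S)
    (hmin : ∀ y ∈ S, f xstar ≤ f y)
    (lam : Fin M → ℝ) (hlam : lam ∈ stdSimplex ℝ (Fin M))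
    (x : EuclideanSpace ℝ (Fin d)) (hx : x = ∑ j, lam j • v j) :
    ∃ η ∈ Set.Icc (0 : ℝ) 2, ∃ j₁ : Fin M, 0 < lam j₁ ∧ ∃ j₂ : Fin M,
      f x - f xstar ≤
        η / 2 * ⟪g x, v j₁ - v j₂⟫ - μ * (facialDist (Set.range v)) ^ 2 / 8 * η ^ 2 :=
  stmt14_general v S hSdef μ hμ f g hsc xstar hxs lam hlam x hx
end

section
/- For x and x* in a polytope S = conv{v^1,…,v^M} with representations x = ∑ λ_j v^j (λ ∈ Δ_M) and x* = ∑ λ*_j v^j (λ* ∈ Δ_M), if ‖x - x*‖ ≥ (ψ_S/2)‖λ - λ*‖₁, then setting η := ‖λ - λ*‖₁ ≤ 2, and writing A = [v^1,…,v^M], there exist p̃, q̃ ∈ Δ_M with supp(p̃) ⊆ supp(λ) such that x - x* = (η/2)A(p̃ - q̃); consequently, for any vector g ∈ ℝ^d there exist j₁ ∈ supp(λ) and j₂ ∈ [M] with ⟨g, x - x*⟩ ≤ (η/2)⟨g, v^{j₁} - v^{j₂}⟩. -/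
open scoped RealInnerProductSpace

theorem stmt16 {d M : ℕ} (v : Fin M → EuclideanSpace ℝ (Fin d)) (ψ : ℝ)
    (lam lamstar : Fin M → ℝ)
    (hlam : lam ∈ stdSimplex ℝ (Fin M)) (hlamstar : lamstar ∈ stdSimplex ℝ (Fin M))
    (x xstar : EuclideanSpace ℝ (Fin d))
    (hx : x = ∑ j, lam j • v j) (hxs : xstar = ∑ j, lamstar j • v j)
    (hdist : ‖x - xstar‖ ≥ ψ / 2 * ∑ j, |lam j - lamstar j|) :
    (∑ j, |lam j - lamstar j|) ≤ 2 ∧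
    ∃ p ∈ stdSimplex ℝ (Fin M), ∃ q ∈ stdSimplex ℝ (Fin M),
      Function.support p ⊆ Function.support lam ∧
      x - xstar = ((∑ j, |lam j - lamstar j|) / 2) • ∑ j, (p j - q j) • v j ∧
      ∀ gr : EuclideanSpace ℝ (Fin d), ∃ j₁ : Fin M, 0 < lam j₁ ∧ ∃ j₂ : Fin M,
        ⟪gr, x - xstar⟫ ≤
          (∑ j, |lam j - lamstar j|) / 2 * ⟪gr, v j₁ - v j₂⟫ := by
  obtain ⟨hl, hls⟩ := hlam
  obtain ⟨hl', hls'⟩ := hlamstar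
  set η := ∑ j, |lam j - lamstar j| with hηdef
  have hη2 : η ≤ 2 := by
    have hterm : ∀ j ∈ Finset.univ, |lam j - lamstar j| ≤ lam j + lamstar j := by
      intro j _
      have h1 := hl j
      have h2 := hl' j
      rw [abs_le]
      constructor <;> linarith
    calc η ≤ ∑ j, (lam j + lamstar j) := Finset.sum_le_sum hterm
      _ = 2 := by rw [Finset.sum_add_distrib, hls, hls']; norm_num
  refine ⟨hη2, ?_⟩
  have hMpos : ∃ j, 0 < lam j := by
    by_contra h
    push_neg at h
    have hz : ∑ j, lam j = 0 := Finset.sum_eq_zero fun j _ => le_antisymm (h j) (hl j)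
    rw [hls] at hz
    norm_num at hz
  have hηnn : (0:ℝ) ≤ η := Finset.sum_nonneg fun j _ => abs_nonneg _
  have hsub : x - xstar = ∑ j, (lam j - lamstar j) • v j := by
    rw [hx, hxs, ← Finset.sum_sub_distrib]
    exact Finset.sum_congr rfl fun j _ => (sub_smul _ _ _).symm
  rcases eq_or_lt_of_le hηnn with h0 | hpos
  · -- η = 0 : lam = lamstar
    have heq : ∀ j, lam j = lamstar j := by
      intro j
      have := (Finset.sum_eq_zero_iff_of_nonneg
        (fun j _ => abs_nonneg (lam j - lamstar j))).mp h0.symm j (Finset.mem_univ j)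
      have := abs_eq_zero.mp this
      linarith
    have hx0 : x = xstar := by
      rw [hx, hxs]
      exact Finset.sum_congr rfl fun j _ => by rw [heq j]
    refine ⟨lam, ⟨hl, hls⟩, lam, ⟨hl, hls⟩, subset_rfl, ?_, ?_⟩
    · rw [hx0]
      simp
    · intro gr
      obtain ⟨j₁, hj₁⟩ := hMpos
      refine ⟨j₁, hj₁, j₁, ?_⟩
      rw [hx0]
      simp
  · -- η > 0
    have hηne : η ≠ 0 := ne_of_gt hpos
    set a : Fin M → ℝ := fun j => max (lam j - lamstar j) 0 with hadef
    set b : Fin M → ℝ := fun j => max (lamstar j - lam j) 0 with hbdef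
    have hab : ∀ j, a j - b j = lam j - lamstar j := by
      intro j
      rcases le_total (lam j) (lamstar j) with h | h
      · rw [hadef, hbdef]
        simp only
        rw [max_eq_right (by linarith), max_eq_left (by linarith)]
        ring
      · rw [hadef, hbdef]
        simp only
        rw [max_eq_left (by linarith), max_eq_right (by linarith)]
        ring
    have habs : ∀ j, a j + b j = |lam j - lamstar j| := by
      intro j
      rcases le_total (lam j) (lamstar j) with h | h
      · rw [hadef, hbdef]
        simp only
        rw [max_eq_right (by linarith), max_eq_left (by linarith),
          abs_of_nonpos (by linarith)]
        ring
      · rw [hadef, hbdef]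
        simp only
        rw [max_eq_left (by linarith), max_eq_right (by linarith),
          abs_of_nonneg (by linarith)]
        ring
    have hann : ∀ j, 0 ≤ a j := fun j => le_max_right _ _
    have hbnn : ∀ j, 0 ≤ b j := fun j => le_max_right _ _
    have hsum0 : ∑ j, (lam j - lamstar j) = 0 := by
      rw [Finset.sum_sub_distrib, hls, hls']
      ring
    have hABdiff : ∑ j, a j - ∑ j, b j = 0 := by
      rw [← Finset.sum_sub_distrib]
      rw [Finset.sum_congr rfl fun j _ => hab j]
      exact hsum0
    have hABsum : ∑ j, a j + ∑ j, b j = η := by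
      rw [← Finset.sum_add_distrib]
      exact Finset.sum_congr rfl fun j _ => habs j
    have hA : ∑ j, a j = η / 2 := by linarith
    have hB : ∑ j, b j = η / 2 := by linarith
    set p : Fin M → ℝ := fun j => 2 / η * a j with hpdef
    set q : Fin M → ℝ := fun j => 2 / η * b j with hqdef
    have hpnn : ∀ j, 0 ≤ p j := fun j => mul_nonneg (by positivity) (hann j)
    have hqnn : ∀ j, 0 ≤ q j := fun j => mul_nonneg (by positivity) (hbnn j)
    have hpsum : ∑ j, p j = 1 := by
      rw [hpdef]
      simp only
      rw [← Finset.mul_sum, hA]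
      field_simp
    have hqsum : ∑ j, q j = 1 := by
      rw [hqdef]
      simp only
      rw [← Finset.mul_sum, hB]
      field_simp
    have hsupp : Function.support p ⊆ Function.support lam := by
      intro j hj
      simp only [Function.mem_support] at hj ⊢
      intro h0
      apply hj
      have hle : lam j - lamstar j ≤ 0 := by
        have := hl' j
        rw [h0]
        linarith
      rw [hpdef]
      simp only
      rw [hadef]
      simp only
      rw [max_eq_right hle, mul_zero]
    have hpq : ∀ j, η / 2 * (p j - q j) = lam j - lamstar j := by
      intro j
      rw [hpdef, hqdef]
      simp only
      rw [← mul_sub, ← mul_assoc]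
      rw [hab j]
      field_simp
    have hmain : x - xstar = (η / 2) • ∑ j, (p j - q j) • v j := by
      rw [hsub, Finset.smul_sum]
      refine Finset.sum_congr rfl fun j _ => ?_
      rw [smul_smul, hpq j]
    refine ⟨p, ⟨hpnn, hpsum⟩, q, ⟨hqnn, hqsum⟩, hsupp, hmain, ?_⟩
    intro gr
    set c : Fin M → ℝ := fun j => ⟪gr, v j⟫ with hcdef
    have hTne : (Finset.univ.filter fun j => 0 < p j).Nonempty := by
      by_contra h
      rw [Finset.not_nonempty_iff_eq_empty, Finset.filter_eq_empty_iff] at h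
      have hz : ∑ j, p j = 0 := Finset.sum_eq_zero fun j hj =>
        le_antisymm (not_lt.mp (h hj)) (hpnn j)
      rw [hpsum] at hz
      norm_num at hz
    obtain ⟨j₁, hj₁T, hj₁max⟩ :=
      Finset.exists_max_image (Finset.univ.filter fun j => 0 < p j) c hTne
    obtain ⟨j0, _⟩ := hMpos
    obtain ⟨j₂, _, hj₂min⟩ :=
      Finset.exists_min_image Finset.univ c ⟨j0, Finset.mem_univ j0⟩
    have hpj₁ : 0 < p j₁ := (Finset.mem_filter.mp hj₁T).2
    have hlamj₁ : 0 < lam j₁ :=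
      lt_of_le_of_ne (hl j₁) (Ne.symm (hsupp (ne_of_gt hpj₁)))
    refine ⟨j₁, hlamj₁, j₂, ?_⟩
    have hinner : ⟪gr, x - xstar⟫ = η / 2 * (∑ j, p j * c j - ∑ j, q j * c j) := by
      rw [hmain, real_inner_smul_right, inner_sum]
      congr 1
      rw [← Finset.sum_sub_distrib]
      refine Finset.sum_congr rfl fun j _ => ?_
      rw [real_inner_smul_right, hcdef]
      ring
    have h1 : ∑ j, p j * c j ≤ c j₁ := by
      calc ∑ j, p j * c j ≤ ∑ j, p j * c j₁ := by
            refine Finset.sum_le_sum fun j _ => ?_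
            rcases (hpnn j).eq_or_lt with h | h
            · rw [← h]; simp
            · exact mul_le_mul_of_nonneg_left
                (hj₁max j (Finset.mem_filter.mpr ⟨Finset.mem_univ j, h⟩)) (le_of_lt h)
        _ = c j₁ := by rw [← Finset.sum_mul, hpsum, one_mul]
    have h2 : c j₂ ≤ ∑ j, q j * c j := by
      calc c j₂ = ∑ j, q j * c j₂ := by rw [← Finset.sum_mul, hqsum, one_mul]
        _ ≤ ∑ j, q j * c j := by
            refine Finset.sum_le_sum fun j _ => ?_
            exact mul_le_mul_of_nonneg_left (hj₂min j (Finset.mem_univ j)) (hqnn j)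
    have hcsub : ⟪gr, v j₁ - v j₂⟫ = c j₁ - c j₂ := by
      rw [inner_sub_right, hcdef]
    rw [hinner, hcsub]
    have : ∑ j, p j * c j - ∑ j, q j * c j ≤ c j₁ - c j₂ := by linarith
    exact mul_le_mul_of_nonneg_left this (by positivity)
end

section
/- In PolyCDwA with exact line-search steps, if at inner step i of outer iteration t the chosen step size satisfies α_{t,i} = -γ_{t,i} (the maximal away step), then λ_i^{t,M} = 0, i.e., vertex i is not in the vertex-support of x^{t,M}; consequently, for any j₁ in the vertex-support V^{t,M} = {j : λ_j^{t,M} > 0}, the line-search optimality yields ⟨∇f(x^{t,j₁}), v^{j₁} - x^{t,j₁}⟩ = 0. -/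
/-!
After its own step, the weight of vertex `i` is only rescaled by the factors `1 - α ≥ 0` of later
steps. So the maximal away step, which sets it to `0`, removes vertex `i` for good, and a weight
that is positive at the end was already positive right after its own step. The latter rules
out the away boundary `α = -γ` of the line search: either `α = 1` and `x = v`, or `α` is
interior and the derivative of the line-search objective vanishes.
-/

open scoped RealInnerProductSpace

section MulRecurrence

variable {w c : ℕ → ℝ} {i M : ℕ}

theorem eq_zero_of_mul_recurrence (hrec : ∀ k, i ≤ k → k < M → w (k + 1) = c k * w k)
    (hiM : i ≤ M) (hi : w i = 0) : w M = 0 := by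
  induction M, hiM using Nat.le_induction with
  | base => exact hi
  | succ k hik ih =>
    rw [hrec k hik k.lt_succ_self, ih fun j hij hjk => hrec j hij (hjk.trans k.lt_succ_self),
      mul_zero]

theorem pos_of_mul_recurrence (hrec : ∀ k, i ≤ k → k < M → w (k + 1) = c k * w k)
    (hc : ∀ k, i ≤ k → k < M → 0 ≤ c k) (hiM : i ≤ M) (hM : 0 < w M) : 0 < w i := by
  induction M, hiM using Nat.le_induction with
  | base => exact hM
  | succ k hik ih =>
    rw [hrec k hik k.lt_succ_self] at hM
    exact ih (fun j hij hjk => hrec j hij (hjk.trans k.lt_succ_self))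
      (fun j hij hjk => hc j hij (hjk.trans k.lt_succ_self))
      (pos_of_mul_pos_right hM (hc k hik k.lt_succ_self))

end MulRecurrence

theorem away_step_weight_eq_zero {L : ℝ} (hL : L < 1) :
    (1 - -(L / (1 - L))) * L + -(L / (1 - L)) = 0 := by
  have : 1 - L ≠ 0 := by linarith
  field_simp
  ring

section LineSearch

variable {E : Type*} [NormedAddCommGroup E] [InnerProductSpace ℝ E] [CompleteSpace E]
  {f : E → ℝ} {g a D : E} {A : ℝ}

theorem inner_gradient_eq_zero_of_isLocalMin_line (hf : HasGradientAt f g (a + A • D))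
    (hmin : IsLocalMin (fun β : ℝ => f (a + β • D)) A) : ⟪g, D⟫ = 0 := by
  have hline : HasDerivAt (fun β : ℝ => a + β • D) D A := by
    simpa using ((hasDerivAt_id A).smul_const D).const_add a
  have hderiv := hf.hasFDerivAt.comp_hasDerivAt A hline
  exact hmin.hasDerivAt_eq_zero hderiv

/-- The constraint `-β (1 - L) ≤ L` encodes `β ≥ -L / (1 - L)` (for `L < 1`); the strict
inequalities put `A` in the interior of the feasible steps. -/
theorem inner_gradient_eq_zero_of_lineSearch {L : ℝ} (hf : HasGradientAt f g (a + A • D))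
    (hopt : ∀ β : ℝ, β ≤ 1 → -β * (1 - L) ≤ L → f (a + A • D) ≤ f (a + β • D))
    (hA : A < 1) (hAL : -A * (1 - L) < L) : ⟪g, D⟫ = 0 := by
  refine inner_gradient_eq_zero_of_isLocalMin_line hf ?_
  have hcont : Continuous fun β : ℝ => -β * (1 - L) := by fun_prop
  filter_upwards [eventually_lt_nhds hA,
    hcont.continuousAt.eventually_lt continuousAt_const hAL] with β hβ hβL
  exact hopt β hβ.le hβL.le

end LineSearch

theorem stmt18_general {d : ℕ} (M : ℕ)
    (v : ℕ → EuclideanSpace ℝ (Fin d))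
    (f : EuclideanSpace ℝ (Fin d) → ℝ)
    (g : EuclideanSpace ℝ (Fin d) → EuclideanSpace ℝ (Fin d))
    (hgrad : ∀ y, HasGradientAt f (g y) y)
    (x : ℕ → ℕ → EuclideanSpace ℝ (Fin d))
    (lam : ℕ → ℕ → ℕ → ℝ) (α : ℕ → ℕ → ℝ)
    (hstep : ∀ s, ∀ i, 1 ≤ i → i ≤ M →
      (α s i ≤ 1 ∧ (-(α s i)) * (1 - lam s (i - 1) i) ≤ lam s (i - 1) i) ∧
      x s i = x s (i - 1) + α s i • (v i - x s (i - 1)) ∧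
      lam s i i = (1 - α s i) * lam s (i - 1) i + α s i ∧
      (∀ j, j ≠ i → lam s i j = (1 - α s i) * lam s (i - 1) j) ∧
      (∀ β : ℝ, β ≤ 1 → (-β) * (1 - lam s (i - 1) i) ≤ lam s (i - 1) i →
        f (x s i) ≤ f (x s (i - 1) + β • (v i - x s (i - 1)))))
    (t : ℕ) :
    (∀ i, 1 ≤ i → i ≤ M → lam t (i - 1) i < 1 →
      α t i = -(lam t (i - 1) i / (1 - lam t (i - 1) i)) → lam t M i = 0) ∧
    (∀ j₁, 1 ≤ j₁ → j₁ ≤ M → 0 < lam t M j₁ →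
      ⟪g (x t j₁), v j₁ - x t j₁⟫ = 0) := by
  have hrec : ∀ i k, i ≤ k → k < M →
      lam t (k + 1) i = (1 - α t (k + 1)) * lam t k i := fun i k hik hkM => by
    simpa using (hstep t (k + 1) (by omega) hkM).2.2.2.1 i (by omega)
  refine ⟨fun i hi hiM hlt hα => ?_, fun j hj hjM hpos => ?_⟩
  · refine eq_zero_of_mul_recurrence (w := fun k => lam t k i) (hrec i) hiM ?_
    rw [(hstep t i hi hiM).2.2.1, hα, away_step_weight_eq_zero hlt]
  · have hposj : 0 < lam t j j := pos_of_mul_recurrence (w := fun k => lam t k j) (hrec j)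
      (fun k _ hkM => sub_nonneg.2 (hstep t (k + 1) (by omega) hkM).1.1) hjM hpos
    obtain ⟨⟨hα1, -⟩, hx, hlam, -, hopt⟩ := hstep t j hj hjM
    have hdir : v j - x t j = (1 - α t j) • (v j - x t (j - 1)) := by
      rw [hx]; module
    rw [hdir, real_inner_smul_right]
    rcases hα1.eq_or_lt with hα | hα
    · rw [hα, sub_self, zero_mul]
    · rw [hx] at hopt ⊢
      rw [inner_gradient_eq_zero_of_lineSearch (hgrad _) hopt hα (by linarith), mul_zero]

theorem stmt18 {d : ℕ} (M : ℕ) (hM : 1 ≤ M)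
    (v : ℕ → EuclideanSpace ℝ (Fin d))
    (f : EuclideanSpace ℝ (Fin d) → ℝ)
    (g : EuclideanSpace ℝ (Fin d) → EuclideanSpace ℝ (Fin d))
    (hgrad : ∀ y, HasGradientAt f (g y) y)
    (x : ℕ → ℕ → EuclideanSpace ℝ (Fin d))
    (lam : ℕ → ℕ → ℕ → ℝ) (α : ℕ → ℕ → ℝ)
    (hinit_nonneg : ∀ j ∈ Finset.Icc 1 M, 0 ≤ lam 0 0 j)
    (hinit_sum : ∑ j ∈ Finset.Icc 1 M, lam 0 0 j = 1)
    (hinit_x : x 0 0 = ∑ j ∈ Finset.Icc 1 M, lam 0 0 j • v j)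
    (hcycle_x : ∀ s, x (s + 1) 0 = x s M)
    (hcycle_lam : ∀ s j, lam (s + 1) 0 j = lam s M j)
    (hstep : ∀ s, ∀ i, 1 ≤ i → i ≤ M →
      (α s i ≤ 1 ∧ (-(α s i)) * (1 - lam s (i - 1) i) ≤ lam s (i - 1) i) ∧
      x s i = x s (i - 1) + α s i • (v i - x s (i - 1)) ∧
      lam s i i = (1 - α s i) * lam s (i - 1) i + α s i ∧
      (∀ j, j ≠ i → lam s i j = (1 - α s i) * lam s (i - 1) j) ∧
      (∀ β : ℝ, β ≤ 1 → (-β) * (1 - lam s (i - 1) i) ≤ lam s (i - 1) i →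
        f (x s i) ≤ f (x s (i - 1) + β • (v i - x s (i - 1)))))
    (t : ℕ) :
    (∀ i, 1 ≤ i → i ≤ M → lam t (i - 1) i < 1 →
      α t i = -(lam t (i - 1) i / (1 - lam t (i - 1) i)) → lam t M i = 0) ∧
    (∀ j₁, 1 ≤ j₁ → j₁ ≤ M → 0 < lam t M j₁ →
      ⟪g (x t j₁), v j₁ - x t j₁⟫ = 0) :=
  stmt18_general M v f g hgrad x lam α hstep t
end
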